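/- arXiv:1511.02537 — 9 statements merged into one kernel-verified Lean document; each statement's English description precedes it below -/
import Mathlib

section
/- There exist constants c₁, c₂ > 0 such that for every real ε with 0 < ε < 1/3 and every integer n ≥ 1 the following holds: if σ₁, …, σₙ are i.i.d. random variables uniform on {+1,−1} and Sₙ = σ₁ + ⋯ + σₙ, then P(Sₙ ≥ (ε+ε²)·n | Sₙ ≥ ε·n) ≥ (c₁/n)·e^{−c₂ ε³ n}. -/
/-!
Counting configurations by their number `k` of `+1` spins turns both events into binomial
tails: `Sₙ ≥ x` iff `k ≥ (x + n) / 2`. Shifting an index `k` of the window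
`(1 + ε) n / 2 ≤ k < (1 + ε + ε²) n / 2` up by `d = ⌈ε² n / 2⌉` lands in the viral tail, and
`C(n, k) ≤ (u / (n - u))ᵈ C(n, k + d)` with `u = (1 + ε + ε²) n / 2 + d`. As `u / (n - u) ≤ 1 + O(ε)`
and `d = O(ε² n)`, this factor is `e^{O(ε³ n + 1)}`, so the biased tail is at most `e^{O(ε³ n + 1)}`
times the viral one. For small `n` the trivial bound `2ⁿ` suffices.
-/

open scoped Classical

def spinSum (n : ℕ) (σ : Fin n → Bool) : ℝ := ∑ i, (if σ i then (1 : ℝ) else -1)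

open Finset Real

theorem card_filter_card_true_eq_sum_choose {α : Type*} [Fintype α] [DecidableEq α]
    (q : ℕ → Prop) [DecidablePred q] :
    #{σ : α → Bool | q #{i | σ i = true}} =
      ∑ k ∈ range (Fintype.card α + 1) with q k, (Fintype.card α).choose k := by
  calc #{σ : α → Bool | q #{i | σ i = true}} = #{s : Finset α | q #s} := by
        refine card_nbij' (fun σ => ({i | σ i = true} : Finset α)) (fun s i => decide (i ∈ s))
          ?_ ?_ ?_ ?_
        · intro σ hσ; simpa using hσ
        · intro s hs; simpa using hs
        · intro σ _; funext i; simp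
        · intro s _; ext i; simp
    _ = ∑ s ∈ (univ : Finset α).powerset, if q #s then 1 else 0 := by
        rw [powerset_univ, card_filter]
    _ = _ := by
        rw [sum_powerset_apply_card (fun k => if q k then 1 else 0), sum_filter, card_univ]
        simp

theorem spinSum_eq_two_mul_card_sub (n : ℕ) (σ : Fin n → Bool) :
    spinSum n σ = 2 * #{i | σ i = true} - n := by
  have h (i : Fin n) :
      (if σ i then (1 : ℝ) else -1) = 2 * (if σ i = true then 1 else 0) - 1 := by
    cases σ i <;> norm_num
  simp only [spinSum, h, sum_sub_distrib, ← mul_sum, sum_boole, sum_const, card_univ,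
    Fintype.card_fin, nsmul_eq_mul, mul_one]

noncomputable def binomialTail (n : ℕ) (x : ℝ) : ℝ :=
  ∑ k ∈ range (n + 1) with x ≤ ((k : ℕ) : ℝ), (n.choose k : ℝ)

theorem card_le_spinSum_eq_binomialTail (n : ℕ) (x : ℝ) :
    (#{σ : Fin n → Bool | x ≤ spinSum n σ} : ℝ) = binomialTail n ((x + n) / 2) := by
  have h (σ : Fin n → Bool) : x ≤ spinSum n σ ↔ (x + n) / 2 ≤ (#{i | σ i = true} : ℕ) := by
    rw [spinSum_eq_two_mul_card_sub]; constructor <;> intro <;> linarith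
  simp_rw [h]
  rw [card_filter_card_true_eq_sum_choose (fun k : ℕ => (x + n) / 2 ≤ k), binomialTail]
  simp

theorem choose_mul_le_choose_succ_mul {n j : ℕ} {l u : ℝ} (hl : 0 ≤ l) (hln : l ≤ n - j)
    (hu : j + 1 ≤ u) : (n.choose j : ℝ) * l ≤ n.choose (j + 1) * u := by
  have hjn : j ≤ n := by exact_mod_cast (show (j : ℝ) ≤ n by linarith)
  have hstep : (n.choose (j + 1) : ℝ) * (j + 1) = n.choose j * (n - j) := by
    exact_mod_cast Nat.choose_succ_right_eq n j
  calc (n.choose j : ℝ) * l ≤ n.choose j * (n - j) := by gcongr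
    _ = n.choose (j + 1) * (j + 1) := hstep.symm
    _ ≤ n.choose (j + 1) * u := by gcongr

theorem choose_mul_pow_le_choose_add_mul_pow {n k d : ℕ} {l u : ℝ} (hl : 0 ≤ l)
    (hln : l ≤ n - (k + d)) (hu : k + d ≤ u) :
    (n.choose k : ℝ) * l ^ d ≤ n.choose (k + d) * u ^ d := by
  induction d with
  | zero => simp
  | succ d ih =>
    push_cast at hln hu
    have hu0 : 0 ≤ u := by linarith [(Nat.cast_nonneg (k + d) : (0 : ℝ) ≤ _)]
    calc (n.choose k : ℝ) * l ^ (d + 1) = n.choose k * l ^ d * l := by ring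
      _ ≤ n.choose (k + d) * u ^ d * l :=
          mul_le_mul_of_nonneg_right (ih (by linarith) (by linarith)) hl
      _ = n.choose (k + d) * l * u ^ d := by ring
      _ ≤ n.choose (k + d + 1) * u * u ^ d := by
          refine mul_le_mul_of_nonneg_right ?_ (pow_nonneg hu0 d)
          exact choose_mul_le_choose_succ_mul hl (by push_cast; linarith) (by push_cast; linarith)
      _ = n.choose (k + (d + 1)) * u ^ (d + 1) := by rw [← add_assoc]; ring

theorem binomialTail_le_one_add_div_pow_mul {n d : ℕ} {a b : ℝ} (hb : 0 ≤ b) (hab : b ≤ a + d)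
    (hbn : b + d < n) :
    binomialTail n a ≤ (1 + ((b + d) / (n - (b + d))) ^ d) * binomialTail n b := by
  set u := b + d
  set l := (n : ℝ) - u
  have hl : 0 < l := by simp only [l]; linarith
  set W := {k ∈ range (n + 1) | a ≤ ((k : ℕ) : ℝ) ∧ (k : ℝ) < b}
  have hsplit : binomialTail n a ≤ ∑ k ∈ W, (n.choose k : ℝ) + binomialTail n b := by
    rw [binomialTail, ← sum_filter_add_sum_filter_not _ (fun k : ℕ => (k : ℝ) < b),
      filter_filter, filter_filter]
    gcongr
    apply sum_le_sum_of_subset_of_nonneg _ (fun _ _ _ => by positivity)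
    intro k hk
    simp only [mem_filter] at hk ⊢
    exact ⟨hk.1, by linarith [hk.2]⟩
  have hterm : ∀ k ∈ W, (n.choose k : ℝ) ≤ (u / l) ^ d * n.choose (k + d) := by
    intro k hk
    simp only [W, mem_filter] at hk
    have key : (n.choose k : ℝ) * l ^ d ≤ n.choose (k + d) * u ^ d :=
      choose_mul_pow_le_choose_add_mul_pow hl.le (by linarith) (by linarith)
    rw [div_pow, div_mul_eq_mul_div, le_div_iff₀ (by positivity)]
    linarith
  have hshift : ∑ k ∈ W, (n.choose (k + d) : ℝ) ≤ binomialTail n b := by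
    rw [show ∑ k ∈ W, (n.choose (k + d) : ℝ) =
        ∑ j ∈ W.map (addRightEmbedding d), (n.choose j : ℝ) by rw [sum_map]; rfl, binomialTail]
    apply sum_le_sum_of_subset_of_nonneg _ (fun _ _ _ => by positivity)
    intro j hj
    obtain ⟨k, hk, rfl⟩ := mem_map.1 hj
    simp only [W, mem_filter, mem_range] at hk
    have hkd : k + d < n := by exact_mod_cast (show ((k + d : ℕ) : ℝ) < n by push_cast; linarith)
    simp only [mem_filter, mem_range, addRightEmbedding_apply]
    exact ⟨by omega, by push_cast; linarith⟩
  calc binomialTail n a ≤ ∑ k ∈ W, (n.choose k : ℝ) + binomialTail n b := hsplit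
    _ ≤ (u / l) ^ d * ∑ k ∈ W, (n.choose (k + d) : ℝ) + binomialTail n b := by
        rw [mul_sum]; gcongr with k hk; exact hterm k hk
    _ ≤ (u / l) ^ d * binomialTail n b + binomialTail n b := by gcongr
    _ = _ := by ring

theorem binomialTail_le_two_pow (n : ℕ) (x : ℝ) : binomialTail n x ≤ 2 ^ n := by
  calc binomialTail n x ≤ ∑ k ∈ range (n + 1), (n.choose k : ℝ) :=
        sum_le_sum_of_subset_of_nonneg (filter_subset _ _) (fun _ _ _ => by positivity)
    _ = 2 ^ n := by exact_mod_cast Nat.sum_range_choose n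

theorem one_le_binomialTail {n : ℕ} {x : ℝ} (hx : x ≤ n) : 1 ≤ binomialTail n x := by
  have hn : n ∈ {k ∈ range (n + 1) | x ≤ ((k : ℕ) : ℝ)} := by simp [hx]
  calc (1 : ℝ) = n.choose n := by simp
    _ ≤ binomialTail n x :=
      single_le_sum (f := fun k => (n.choose k : ℝ)) (fun _ _ => by positivity) hn

theorem pow_le_exp_mul_sub_one {x : ℝ} (hx : 0 ≤ x) (d : ℕ) : x ^ d ≤ exp (d * (x - 1)) := by
  rw [exp_nat_mul]
  exact pow_le_pow_left₀ hx (by linarith [add_one_le_exp (x - 1)]) d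

theorem shift_ratio_pow_le_exp {ε : ℝ} (hε : 0 < ε) (hε3 : ε < 1 / 3) {n d : ℕ} (hn : 9 ≤ n)
    (hd : (d : ℝ) ≤ ε ^ 2 * n / 2 + 1) {u : ℝ} (hu : u = ((ε + ε ^ 2) * n + n) / 2 + d) :
    (u / (n - u)) ^ d ≤ exp (8 * ε ^ 3 * n + 8) := by
  have hn9 : (9 : ℝ) ≤ n := by exact_mod_cast hn
  have hεn : ε * n ≤ n / 3 := by nlinarith
  have hε2n : ε ^ 2 * n ≤ ε * n / 3 := by nlinarith [mul_pos hε (by positivity : (0 : ℝ) < n)]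
  have hl : (n : ℝ) / 9 ≤ n - u := by rw [hu]; linarith
  have hl0 : 0 < (n : ℝ) - u := by linarith
  have hu0 : 0 ≤ u := by rw [hu]; positivity
  have hexcess : d * (u - (n - u)) ≤ (8 * ε ^ 3 * n + 8) * (n / 9) := by
    have hprod : (d : ℝ) * ((ε + ε ^ 2) * n + 2 * d)
        ≤ (ε ^ 2 * n / 2 + 1) * ((ε + 2 * ε ^ 2) * n + 2) :=
      mul_le_mul hd (by linarith) (by positivity) (by positivity)
    have hε4 : ε ^ 4 * n ^ 2 ≤ ε ^ 3 * n ^ 2 / 3 := by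
      have := mul_le_mul_of_nonneg_right hε3.le (by positivity : (0 : ℝ) ≤ ε ^ 3 * n ^ 2)
      linarith
    rw [hu]
    nlinarith
  calc (u / (n - u)) ^ d ≤ exp (d * (u / (n - u) - 1)) :=
        pow_le_exp_mul_sub_one (by positivity) d
    _ ≤ exp (8 * ε ^ 3 * n + 8) := by
        gcongr
        rw [div_sub_one hl0.ne', mul_div_assoc', div_le_iff₀ hl0]
        exact hexcess.trans (mul_le_mul_of_nonneg_left hl (by positivity))

theorem binomialTail_le_exp_mul {ε : ℝ} (hε : 0 < ε) (hε3 : ε < 1 / 3) (n : ℕ) :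
    binomialTail n ((ε * n + n) / 2) ≤
      exp (8 * ε ^ 3 * n + 9) * binomialTail n (((ε + ε ^ 2) * n + n) / 2) := by
  have hεn : ε * n ≤ n / 3 := by nlinarith
  have hε2n : ε ^ 2 * n ≤ ε * n / 3 := by
    have := mul_le_mul_of_nonneg_right hε3.le (by positivity : (0 : ℝ) ≤ ε * n)
    linarith
  set b := ((ε + ε ^ 2) * n + n) / 2
  have hb0 : 0 ≤ b := by positivity
  have hbn : b ≤ n := by simp only [b]; linarith
  have hone : 1 ≤ binomialTail n b := one_le_binomialTail hbn
  have hexp : 1 ≤ exp (8 * ε ^ 3 * n) := one_le_exp (by positivity)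
  have htwo : 2 ≤ exp 1 := by linarith [add_one_le_exp 1]
  rcases lt_or_ge n 9 with hsmall | hlarge
  · calc binomialTail n ((ε * n + n) / 2) ≤ 2 ^ n := binomialTail_le_two_pow _ _
      _ ≤ 2 ^ 8 := pow_le_pow_right₀ (by norm_num) (by omega)
      _ ≤ exp 1 ^ 8 := pow_le_pow_left₀ (by norm_num) htwo 8
      _ ≤ exp 9 := by rw [← exp_nat_mul]; gcongr; norm_num
      _ ≤ exp (8 * ε ^ 3 * n + 9) * binomialTail n b := by
          have : (0 : ℝ) ≤ 8 * ε ^ 3 * n := by positivity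
          exact (exp_le_exp.2 (by linarith)).trans (le_mul_of_one_le_right (exp_pos _).le hone)
  · set d := ⌈ε ^ 2 * n / 2⌉₊
    have hd_ge : ε ^ 2 * n / 2 ≤ d := Nat.le_ceil _
    have hd_le : (d : ℝ) ≤ ε ^ 2 * n / 2 + 1 := (Nat.ceil_lt_add_one (by positivity)).le
    have hn9 : (9 : ℝ) ≤ n := by exact_mod_cast hlarge
    have hshift := binomialTail_le_one_add_div_pow_mul (n := n) (d := d) (a := (ε * n + n) / 2)
      hb0 (by simp only [b]; linarith) (by simp only [b]; linarith)
    have hratio := shift_ratio_pow_le_exp hε hε3 hlarge hd_le rfl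
    calc binomialTail n ((ε * n + n) / 2)
        ≤ (1 + ((b + d) / (n - (b + d))) ^ d) * binomialTail n b := hshift
      _ ≤ (1 + exp (8 * ε ^ 3 * n + 8)) * binomialTail n b := by gcongr
      _ ≤ exp (8 * ε ^ 3 * n + 9) * binomialTail n b := by
          gcongr
          rw [show 8 * ε ^ 3 * n + 9 = 8 * ε ^ 3 * n + 8 + 1 by ring,
            exp_add (8 * ε ^ 3 * n + 8) 1]
          nlinarith [one_le_exp (show 0 ≤ 8 * ε ^ 3 * n + 8 by positivity),
            mul_le_mul_of_nonneg_left htwo (exp_pos (8 * ε ^ 3 * n + 8)).le]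

-- `P(A | B) = #(A ∩ B) / #B` under the uniform distribution on configurations.
/-- There exist constants c₁, c₂ > 0 such that for every 0 < ε < 1/3 and n ≥ 1, for
    i.i.d. uniform ±1 spins σ₁, …, σₙ with sum Sₙ:
    P(Sₙ ≥ (ε+ε²)n | Sₙ ≥ εn) ≥ (c₁/n)·e^{−c₂ε³n}.
    The conditional probability is expressed by counting configurations:
    P(A | B) = |A ∩ B| / |B| under the uniform distribution on {±1}ⁿ. -/
theorem stmt1 : ∃ c₁ c₂ : ℝ, 0 < c₁ ∧ 0 < c₂ ∧ ∀ ε : ℝ, 0 < ε → ε < 1/3 →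
    ∀ n : ℕ, 1 ≤ n →
    ((Finset.univ.filter (fun σ : Fin n → Bool =>
        (ε + ε^2) * n ≤ spinSum n σ ∧ ε * n ≤ spinSum n σ)).card : ℝ) /
      ((Finset.univ.filter (fun σ : Fin n → Bool => ε * n ≤ spinSum n σ)).card : ℝ)
      ≥ (c₁ / n) * Real.exp (-(c₂ * ε^3 * n)) := by
  refine ⟨exp (-9), 8, exp_pos _, by norm_num, fun ε hε hε3 n hn => ?_⟩
  have hn1 : (1 : ℝ) ≤ n := by exact_mod_cast hn
  have hthresholds : ε * n ≤ (ε + ε ^ 2) * n := by nlinarith [sq_nonneg ε]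
  have hviral : univ.filter (fun σ : Fin n → Bool =>
        (ε + ε ^ 2) * n ≤ spinSum n σ ∧ ε * n ≤ spinSum n σ) =
      univ.filter (fun σ : Fin n → Bool => (ε + ε ^ 2) * n ≤ spinSum n σ) :=
    filter_congr fun σ _ => and_iff_left_of_imp fun h => hthresholds.trans h
  have hbias := binomialTail_le_exp_mul hε hε3 n
  have hεε : (ε + ε ^ 2) * n ≤ n := mul_le_of_le_one_left (by positivity) (by nlinarith)
  have hbiased_pos : 0 < binomialTail n ((ε * n + n) / 2) :=
    one_pos.trans_le (one_le_binomialTail (by linarith))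
  rw [hviral, card_le_spinSum_eq_binomialTail, card_le_spinSum_eq_binomialTail, ge_iff_le,
    le_div_iff₀ hbiased_pos]
  calc exp (-9) / n * exp (-(8 * ε ^ 3 * n)) * binomialTail n ((ε * n + n) / 2)
      ≤ exp (-9) * exp (-(8 * ε ^ 3 * n)) * binomialTail n ((ε * n + n) / 2) := by
        gcongr; exact div_le_self (exp_pos _).le hn1
    _ ≤ exp (-9) * exp (-(8 * ε ^ 3 * n)) *
          (exp (8 * ε ^ 3 * n + 9) * binomialTail n (((ε + ε ^ 2) * n + n) / 2)) := by gcongr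
    _ = binomialTail n (((ε + ε ^ 2) * n + n) / 2) := by
        rw [← mul_assoc, ← exp_add, ← exp_add]; ring_nf; simp
end

section
/- Let n, q, r be integers with n/2 < r < q ≤ n, and let X be a binomial random variable with parameters n and 1/2. Then P(X ≥ q | X ≥ r) > (1/n)·((n−q)/r)^{q−r}. Equivalently, (∑_{i=q}^{n} C(n,i)) / (∑_{i=r}^{n} C(n,i)) > (1/n)·((n−q)/r)^{q−r}. -/
/-!
Past the middle the binomial coefficients decrease, so the tail `∑_{i ≥ r} C(n,i)` is at most
`n · C(n,r)`, while `∑_{i ≥ q} C(n,i) ≥ C(n,q)`. Writing `k = q - r` and `c = n - q`,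
`C(n,q) / C(n,r) = ∏_{j<k} (c+1+j) / (r+1+j)`, and each factor exceeds `c / r` because `c < r`.
-/

open Finset

namespace Nat

theorem choose_succ_le_self {n i : ℕ} (h : n ≤ 2 * i + 1) : n.choose (i + 1) ≤ n.choose i :=
  Nat.le_of_mul_le_mul_right
    (by rw [choose_succ_right_eq]; exact Nat.mul_le_mul_left _ (by omega)) i.succ_pos

theorem choose_antitoneOn (n : ℕ) : AntitoneOn n.choose (Set.Ici (n / 2)) :=
  antitoneOn_nat_Ici_of_succ_le fun _ hi => choose_succ_le_self (by omega)

theorem sum_Icc_choose_le {n r : ℕ} (hr : n ≤ 2 * r) :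
    ∑ i ∈ Icc r n, n.choose i ≤ (n + 1 - r) * n.choose r := by
  calc ∑ i ∈ Icc r n, n.choose i ≤ ∑ _i ∈ Icc r n, n.choose r :=
        sum_le_sum fun i hi => choose_antitoneOn n (by simp; omega)
          (by simp [mem_Icc] at hi ⊢; omega) (mem_Icc.1 hi).1
    _ = (n + 1 - r) * n.choose r := by rw [sum_const, card_Icc, smul_eq_mul]

theorem choose_mul_ascFactorial {n q r : ℕ} (hrq : r ≤ q) (hq : q ≤ n) :
    n.choose q * (r + 1).ascFactorial (q - r) = n.choose r * (n - q + 1).ascFactorial (q - r) := by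
  apply Nat.eq_of_mul_eq_mul_right (Nat.mul_pos r.factorial_pos (n - q).factorial_pos)
  calc n.choose q * (r + 1).ascFactorial (q - r) * (r ! * (n - q)!)
      = n.choose q * (r ! * (r + 1).ascFactorial (q - r)) * (n - q)! := by ring
    _ = n ! := by
      rw [factorial_mul_ascFactorial, Nat.add_sub_cancel' hrq, choose_mul_factorial_mul_factorial hq]
    _ = n.choose r * r ! * ((n - q)! * (n - q + 1).ascFactorial (q - r)) := by
      rw [factorial_mul_ascFactorial, show n - q + (q - r) = n - r by omega,
        choose_mul_factorial_mul_factorial (hrq.trans hq)]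
    _ = n.choose r * (n - q + 1).ascFactorial (q - r) * (r ! * (n - q)!) := by ring

theorem pow_mul_ascFactorial_lt {c r k : ℕ} (hcr : c < r) (hk : k ≠ 0) :
    c ^ k * (r + 1).ascFactorial k < r ^ k * (c + 1).ascFactorial k := by
  induction k with
  | zero => exact absurd rfl hk
  | succ k ih =>
    rw [ascFactorial_succ, ascFactorial_succ]
    have hstep : c * (r + 1 + k) < r * (c + 1 + k) := by nlinarith
    rcases k.eq_zero_or_pos with rfl | hk
    · simpa using hstep
    calc c ^ (k + 1) * ((r + 1 + k) * (r + 1).ascFactorial k)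
        = c ^ k * (r + 1).ascFactorial k * (c * (r + 1 + k)) := by ring
      _ < r ^ k * (c + 1).ascFactorial k * (r * (c + 1 + k)) :=
        Nat.mul_lt_mul_of_le_of_lt (ih hk.ne').le hstep
          (Nat.mul_pos (Nat.pow_pos (Nat.zero_lt_of_lt hcr)) (ascFactorial_pos c k))
      _ = r ^ (k + 1) * ((c + 1 + k) * (c + 1).ascFactorial k) := by ring

theorem sub_pow_mul_choose_lt_pow_mul_choose {n q r : ℕ} (hqr : n - q < r) (hrq : r < q)
    (hq : q ≤ n) : (n - q) ^ (q - r) * n.choose r < r ^ (q - r) * n.choose q := by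
  refine Nat.lt_of_mul_lt_mul_right (a := (n - q + 1).ascFactorial (q - r)) ?_
  calc (n - q) ^ (q - r) * n.choose r * (n - q + 1).ascFactorial (q - r)
      = n.choose q * ((n - q) ^ (q - r) * (r + 1).ascFactorial (q - r)) := by
        rw [mul_assoc, ← choose_mul_ascFactorial hrq.le hq]; ring
    _ < n.choose q * (r ^ (q - r) * (n - q + 1).ascFactorial (q - r)) :=
        Nat.mul_lt_mul_of_pos_left (pow_mul_ascFactorial_lt hqr (by omega)) (choose_pos hq)
    _ = r ^ (q - r) * n.choose q * (n - q + 1).ascFactorial (q - r) := by ring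

theorem sub_pow_mul_sum_Icc_choose_lt {n q r : ℕ} (hr : n < 2 * r) (hrq : r < q) (hq : q ≤ n) :
    (n - q) ^ (q - r) * ∑ i ∈ Icc r n, n.choose i < n * r ^ (q - r) * ∑ i ∈ Icc q n, n.choose i :=
  calc (n - q) ^ (q - r) * ∑ i ∈ Icc r n, n.choose i
      ≤ (n - q) ^ (q - r) * (n * n.choose r) := by
        gcongr
        exact (sum_Icc_choose_le hr.le).trans (Nat.mul_le_mul_right _ (by omega))
    _ = n * ((n - q) ^ (q - r) * n.choose r) := by ring
    _ < n * (r ^ (q - r) * n.choose q) :=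
        Nat.mul_lt_mul_of_pos_left (sub_pow_mul_choose_lt_pow_mul_choose (by omega) hrq hq)
          (by omega)
    _ ≤ n * r ^ (q - r) * ∑ i ∈ Icc q n, n.choose i := by
        rw [← mul_assoc]
        exact Nat.mul_le_mul_left _ (single_le_sum (fun _ _ => zero_le _) (by simp [hq]))

end Nat

/-- For X ~ B(n,1/2) and integers n/2 < r < q ≤ n,
    P(X ≥ q | X ≥ r) = (∑_{i=q}^n C(n,i)) / (∑_{i=r}^n C(n,i)) > (1/n)·((n−q)/r)^{q−r}. -/
theorem stmt2 (n q r : ℕ) (hr : n < 2*r) (hrq : r < q) (hq : q ≤ n) :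
    (∑ i ∈ Finset.Icc q n, (n.choose i : ℝ)) / (∑ i ∈ Finset.Icc r n, (n.choose i : ℝ))
      > (1 / n) * (((n : ℝ) - q) / r) ^ (q - r) := by
  have key : ((n - q : ℕ) : ℝ) ^ (q - r) * ∑ i ∈ Icc r n, (n.choose i : ℝ)
      < n * r ^ (q - r) * ∑ i ∈ Icc q n, (n.choose i : ℝ) := by
    exact_mod_cast Nat.sub_pow_mul_sum_Icc_choose_lt hr hrq hq
  have hSr : (0 : ℝ) < ∑ i ∈ Icc r n, (n.choose i : ℝ) :=
    sum_pos (fun i hi => mod_cast Nat.choose_pos (mem_Icc.1 hi).2) ⟨r, by simp; omega⟩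
  have hn : (0 : ℝ) < n := mod_cast (show 0 < n by omega)
  have hr0 : (0 : ℝ) < r := mod_cast (show 0 < r by omega)
  rw [Nat.cast_sub hq] at key
  rw [gt_iff_lt, lt_div_iff₀ hSr]
  calc 1 / n * ((n - q) / r) ^ (q - r) * ∑ i ∈ Icc r n, (n.choose i : ℝ)
      = (n - q) ^ (q - r) * (∑ i ∈ Icc r n, (n.choose i : ℝ)) / (n * r ^ (q - r)) := by
        rw [div_pow]; field_simp
    _ < ∑ i ∈ Icc q n, (n.choose i : ℝ) := by
        rw [div_lt_iff₀ (by positivity)]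
        linarith
end

section
/- Let n, q, r be integers with n/2 < r < q ≤ n. Then C(n,q) / C(n,r) > ((n−q)/r)^{q−r}. -/
open Finset

lemma aux_id (n r : ℕ) : ∀ m, r + m ≤ n →
    n.choose (r + m) * ∏ j ∈ Finset.range m, (r + j + 1) =
      n.choose r * ∏ j ∈ Finset.range m, (n - r - j) := by
  intro m
  induction m with
  | zero => simp
  | succ m ih =>
    intro h
    have h' : r + m ≤ n := by omega
    rw [Finset.prod_range_succ, Finset.prod_range_succ]
    have key := Nat.choose_succ_right_eq n (r + m)
    have e1 : r + (m + 1) = (r + m) + 1 := by ring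
    have e2 : n - r - m = n - (r + m) := by omega
    rw [e1]
    calc n.choose ((r + m) + 1) * ((∏ j ∈ Finset.range m, (r + j + 1)) * (r + m + 1))
        = (n.choose ((r + m) + 1) * (r + m + 1)) * ∏ j ∈ Finset.range m, (r + j + 1) := by ring
      _ = (n.choose (r + m) * (n - (r + m))) * ∏ j ∈ Finset.range m, (r + j + 1) := by rw [key]
      _ = (n.choose (r + m) * ∏ j ∈ Finset.range m, (r + j + 1)) * (n - (r + m)) := by ring
      _ = (n.choose r * ∏ j ∈ Finset.range m, (n - r - j)) * (n - (r + m)) := by rw [ih h']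
      _ = n.choose r * ((∏ j ∈ Finset.range m, (n - r - j)) * (n - r - m)) := by rw [e2]; ring

lemma aux_id' (n r m : ℕ) (h : r + m ≤ n) :
    n.choose (r + m) * ∏ j ∈ Finset.range m, (r + j + 1) =
      n.choose r * ∏ j ∈ Finset.range m, (n - (r + m) + j + 1) := by
  rw [aux_id n r m h]
  congr 1
  rw [← Finset.prod_range_reflect (fun j => n - (r + m) + j + 1) m]
  apply Finset.prod_congr rfl
  intro j hj
  rw [Finset.mem_range] at hj
  omega

/-- For integers n/2 < r < q ≤ n, C(n,q)/C(n,r) > ((n−q)/r)^{q−r}. -/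
theorem stmt3 (n q r : ℕ) (hr : n < 2*r) (hrq : r < q) (hq : q ≤ n) :
    ((n.choose q : ℝ)) / (n.choose r : ℝ) > (((n : ℝ) - q) / r) ^ (q - r) := by
  have hrn : r ≤ n := le_trans (le_of_lt hrq) hq
  have hrpos : 0 < r := by omega
  set m := q - r with hm_def
  have hm1 : 1 ≤ m := by omega
  have hqrm : q = r + m := by omega
  have hid := aux_id' n r m (by omega)
  rw [← hqrm] at hid
  have hP : (0:ℝ) < ∏ j ∈ Finset.range m, ((r + j + 1 : ℕ) : ℝ) := by
    apply Finset.prod_pos; intro j _; positivity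
  have hcr : (0:ℝ) < (n.choose r : ℝ) := by exact_mod_cast Nat.choose_pos hrn
  have hidR : (n.choose q : ℝ) * ∏ j ∈ Finset.range m, ((r + j + 1 : ℕ) : ℝ)
      = (n.choose r : ℝ) * ∏ j ∈ Finset.range m, ((n - q + j + 1 : ℕ) : ℝ) := by
    exact_mod_cast hid
  have hratio : (n.choose q : ℝ) / (n.choose r : ℝ)
      = ∏ j ∈ Finset.range m, ((n - q + j + 1 : ℕ) : ℝ) / ((r + j + 1 : ℕ) : ℝ) := by
    rw [Finset.prod_div_distrib]
    rw [div_eq_div_iff hcr.ne' hP.ne']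
    linarith [hidR]
  rw [gt_iff_lt, hratio]
  have hcast : ((n : ℝ) - q) = ((n - q : ℕ) : ℝ) := by
    push_cast [Nat.cast_sub hq]; ring
  have hconst : (((n : ℝ) - q) / r) ^ m
      = ∏ _j ∈ Finset.range m, (((n - q : ℕ) : ℝ) / (r : ℝ)) := by
    rw [Finset.prod_const, Finset.card_range, hcast]
  rw [hconst]
  have hnqr : (n - q : ℕ) < r := by omega
  by_cases hqn : q = n
  · -- constant is 0
    have hz : ((n - q : ℕ) : ℝ) = 0 := by rw [hqn]; simp
    have : ∏ _j ∈ Finset.range m, (((n - q : ℕ) : ℝ) / (r : ℝ)) = 0 := by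
      rw [Finset.prod_const, hz]
      simp [zero_pow (by omega : m ≠ 0)]
    rw [this]
    apply Finset.prod_pos
    intro j _
    apply div_pos <;> [skip; positivity]
    have : 0 < n - q + j + 1 := by omega
    exact_mod_cast this
  · apply Finset.prod_lt_prod_of_nonempty
    · intro j _
      apply div_pos
      · have : 0 < n - q := by omega
        exact_mod_cast this
      · exact_mod_cast hrpos
    · intro j hj
      rw [Finset.mem_range] at hj
      rw [div_lt_div_iff₀ (by exact_mod_cast hrpos) (by positivity)]
      have h1 : ((n - q : ℕ) : ℝ) < (r : ℝ) := by exact_mod_cast hnqr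
      have h2 : ((n - q + j + 1 : ℕ) : ℝ) = ((n - q : ℕ) : ℝ) + j + 1 := by push_cast; ring
      have h3 : ((r + j + 1 : ℕ) : ℝ) = (r : ℝ) + j + 1 := by push_cast; ring
      rw [h2, h3]
      have hjpos : (0:ℝ) ≤ (j : ℝ) := by positivity
      nlinarith
    · exact ⟨0, Finset.mem_range.mpr (by omega)⟩
end

section
/- There exists an absolute constant c₀ > 0 such that the following holds. For every integer n ≥ 1 and all reals ε, γ with 0 < ε < γ < 1/3, if X is a binomial random variable with parameters n and 1/2, then P(X ≥ (1/2+γ)n | X ≥ (1/2+ε)n) ≥ (c₀/n)·e^{−6(γ²−ε²)n}. -/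
/-!
Both tails are controlled by their first terms: the numerator is at least `C(n, b)`, and since
`C(n, ·)` decreases beyond `n / 2` the denominator is at most `(n + 1) C(n, a)`, where `a` and `b`
are the two thresholds. The ratio `C(n, b) / C(n, a)` telescopes into `∏_{a ≤ i < b} (n - i) / (i + 1)`;
each factor is `(1 - x) / (1 + x) ≥ e^{-6x}` with `x = (2i + 2 - n) / n ≤ 11 / 15` once `n ≥ 30`, and
the exponents sum to `(6 / n) (b - a) (a + b + 1 - n) ≤ 6 (γ² - ε²) n + 26`. For `n < 30` the
trivial bound `2^{-n}` suffices, which is why `c₀ = e^{-30}`.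
-/

open Finset Real

theorem Real.exp_neg_six_mul_mul_one_add_le_one_sub {x : ℝ} (hx0 : 0 ≤ x) (hx1 : x ≤ 11 / 15) :
    exp (-(6 * x)) * (1 + x) ≤ 1 - x := by
  have h3 : 1 + 3 * x ≤ exp (3 * x) := by linarith [add_one_le_exp (3 * x)]
  have h6 : (1 + 3 * x) ^ 2 ≤ exp (6 * x) := by
    rw [show 6 * x = 3 * x + 3 * x by ring, exp_add, ← sq]
    gcongr
  rw [exp_neg, inv_mul_le_iff₀ (exp_pos _)]
  -- `(1 - x) (1 + 3x)² - (1 + x) = x (4 + 3x - 9x²)`, which is nonnegative for `x ≤ 11 / 15`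
  nlinarith [mul_le_mul_of_nonneg_left h6 (by linarith : 0 ≤ 1 - x),
    mul_nonneg hx0 (by nlinarith : 0 ≤ 4 + 3 * x - 9 * x ^ 2)]

theorem Nat.choose_le_choose_of_half_le {n a i : ℕ} (ha : n ≤ 2 * a) (hi : a ≤ i) :
    n.choose i ≤ n.choose a := by
  induction i, hi using Nat.le_induction with
  | base => rfl
  | succ i hi ih =>
    refine le_trans (Nat.le_of_mul_le_mul_right ?_ i.succ_pos) ih
    rw [Nat.choose_succ_right_eq]
    exact Nat.mul_le_mul_left _ (by omega)

theorem Real.exp_sum_Ico_mul_le_of_exp_mul_le_succ {f g : ℕ → ℝ} {a b : ℕ} (hab : a ≤ b)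
    (h : ∀ i ∈ Ico a b, exp (g i) * f i ≤ f (i + 1)) :
    exp (∑ i ∈ Ico a b, g i) * f a ≤ f b := by
  induction b, hab using Nat.le_induction with
  | base => simp
  | succ b hab ih =>
    rw [sum_Ico_succ_top hab, exp_add, mul_comm (exp _), mul_assoc]
    calc exp (g b) * (exp (∑ i ∈ Ico a b, g i) * f a)
        ≤ exp (g b) * f b := by
          gcongr
          exact ih fun i hi => h i (Ico_subset_Ico_right b.le_succ hi)
      _ ≤ f (b + 1) := h b (by simp [hab])

theorem Finset.sum_Ico_two_mul_add {a b : ℕ} (hab : a ≤ b) (c : ℝ) :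
    ∑ i ∈ Ico a b, (2 * (i : ℝ) + c) = (b - a) * (a + b - 1 + c) := by
  induction b, hab using Nat.le_induction with
  | base => simp
  | succ b hab ih =>
    rw [sum_Ico_succ_top hab, ih]
    push_cast
    ring

def binomTail (n k : ℕ) : ℝ := ∑ i ∈ Icc k n, (n.choose i : ℝ)

theorem binomTail_le_two_pow (n k : ℕ) : binomTail n k ≤ 2 ^ n := by
  calc binomTail n k ≤ ∑ i ∈ range (n + 1), (n.choose i : ℝ) := by
        refine sum_le_sum_of_subset_of_nonneg (fun i hi => ?_) fun _ _ _ => by positivity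
        simp only [mem_Icc, mem_range] at hi ⊢
        omega
    _ = 2 ^ n := by exact_mod_cast Nat.sum_range_choose n

theorem choose_le_binomTail {n k : ℕ} (hk : k ≤ n) : (n.choose k : ℝ) ≤ binomTail n k :=
  single_le_sum (f := fun i => (n.choose i : ℝ)) (fun _ _ => by positivity) (by simp [hk])

theorem binomTail_pos {n k : ℕ} (hk : k ≤ n) : 0 < binomTail n k :=
  (Nat.cast_pos.mpr (Nat.choose_pos hk)).trans_le (choose_le_binomTail hk)

theorem binomTail_le_succ_mul_choose {n k : ℕ} (h : n ≤ 2 * k) :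
    binomTail n k ≤ (n + 1) * n.choose k := by
  calc binomTail n k ≤ ∑ _i ∈ Icc k n, (n.choose k : ℝ) :=
        sum_le_sum fun i hi => by
          exact_mod_cast Nat.choose_le_choose_of_half_le h (mem_Icc.mp hi).1
    _ ≤ (n + 1) * n.choose k := by
        rw [sum_const, Nat.card_Icc, nsmul_eq_mul]
        gcongr
        exact_mod_cast Nat.sub_le (n + 1) k

/-- The ratio `C(n, i + 1) / C(n, i) = (n - i) / (i + 1)` equals `(1 - x) / (1 + x)` for
`x = (2i + 2 - n) / n`, and `x ≤ 11 / 15` here. -/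
theorem exp_neg_mul_choose_le_choose_succ {n i : ℕ} (hhalf : n ≤ 2 * i + 2)
    (h : 15 * (i + 1) ≤ 13 * n) :
    exp (-(6 / n) * (2 * i + 2 - n)) * n.choose i ≤ n.choose (i + 1) := by
  have hin : i < n := by omega
  have hn : (0 : ℝ) < n := by exact_mod_cast (Nat.zero_lt_of_lt hin)
  have hhalf' : (n : ℝ) ≤ 2 * i + 2 := by exact_mod_cast hhalf
  have h' : 15 * ((i : ℝ) + 1) ≤ 13 * n := by exact_mod_cast h
  set x : ℝ := (2 * i + 2 - n) / n with hx
  have hx0 : 0 ≤ x := div_nonneg (by linarith) hn.le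
  have hx1 : x ≤ 11 / 15 := by rw [hx, div_le_iff₀ hn]; linarith
  have hrec : (n.choose (i + 1) : ℝ) * (i + 1) = n.choose i * (n - i) := by
    have := congrArg (Nat.cast : ℕ → ℝ) (Nat.choose_succ_right_eq n i)
    push_cast [Nat.cast_sub hin.le] at this
    exact this
  have hfactor : exp (-(6 * x)) * (i + 1) ≤ n - i := by
    have hq := mul_le_mul_of_nonneg_left (exp_neg_six_mul_mul_one_add_le_one_sub hx0 hx1) hn.le
    have e1 : (n : ℝ) * (1 + x) = 2 * i + 2 := by rw [hx]; field_simp; ring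
    have e2 : (n : ℝ) * (1 - x) = 2 * (n - i) - 2 := by rw [hx]; field_simp; ring
    nlinarith [exp_pos (-(6 * x))]
  rw [show -(6 / (n : ℝ)) * (2 * i + 2 - n) = -(6 * x) by rw [hx]; ring]
  refine le_of_mul_le_mul_right ?_ (by positivity : (0 : ℝ) < i + 1)
  rw [hrec, mul_right_comm, mul_comm (n.choose i : ℝ)]
  gcongr

theorem choose_le_exp_mul_choose {n a b : ℕ} (hab : a ≤ b) (hhalf : n ≤ 2 * a)
    (h : 15 * b ≤ 13 * n) :
    (n.choose a : ℝ) ≤ exp (6 / n * ((b - a) * (a + b + 1 - n))) * n.choose b := by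
  have htelescope : exp (∑ i ∈ Ico a b, -(6 / n) * (2 * (i : ℝ) + (2 - n))) * n.choose a
      ≤ n.choose b :=
    exp_sum_Ico_mul_le_of_exp_mul_le_succ hab fun i hi => by
      obtain ⟨hai, hib⟩ := mem_Ico.mp hi
      simpa only [add_sub_assoc] using
        exp_neg_mul_choose_le_choose_succ (n := n) (i := i) (by omega) (by omega)
  rw [← mul_sum, sum_Ico_two_mul_add hab, neg_mul, exp_neg, inv_mul_le_iff₀ (exp_pos _)]
    at htelescope
  rwa [show (a + b - 1 + (2 - n) : ℝ) = a + b + 1 - n by ring] at htelescope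

theorem six_div_mul_sub_mul_le {n a b ε γ : ℝ} (hn : 1 ≤ n) (hε : 0 ≤ ε) (hγ : γ ≤ 1 / 3)
    (hab : a ≤ b) (ha : (1 / 2 + ε) * n ≤ a) (ha' : a < (1 / 2 + ε) * n + 1)
    (hb' : b < (1 / 2 + γ) * n + 1) :
    6 / n * ((b - a) * (a + b + 1 - n)) ≤ 6 * (γ ^ 2 - ε ^ 2) * n + 26 := by
  have hS : (b - a) * (a + b + 1 - n) ≤ ((γ - ε) * n + 1) * ((γ + ε) * n + 3) :=
    mul_le_mul (by linarith) (by linarith) (by nlinarith) (by nlinarith)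
  rw [div_mul_eq_mul_div, div_le_iff₀ (by linarith)]
  nlinarith [mul_le_mul_of_nonneg_right hγ (by linarith : (0 : ℝ) ≤ n),
    mul_nonneg hε (by linarith : (0 : ℝ) ≤ n)]

theorem exp_neg_thirty_mul_binomTail_le {n k l : ℕ} (hn : n ≤ 30) (hl : l ≤ n) :
    exp (-30) * binomTail n k ≤ binomTail n l := by
  calc exp (-30) * binomTail n k ≤ exp (-30) * 2 ^ n := by gcongr; exact binomTail_le_two_pow n k
    _ ≤ exp (-30) * exp 1 ^ 30 := by
        gcongr
        calc (2 : ℝ) ^ n ≤ 2 ^ 30 := pow_le_pow_right₀ (by norm_num) hn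
          _ ≤ exp 1 ^ 30 := by gcongr; linarith [add_one_le_exp 1]
    _ = 1 := by rw [← exp_nat_mul, ← exp_add]; norm_num
    _ ≤ n.choose l := by exact_mod_cast Nat.choose_pos hl
    _ ≤ binomTail n l := choose_le_binomTail hl

theorem binomTail_ceil_le_of_thirty_le {n : ℕ} (hn : 30 ≤ n) {ε γ : ℝ} (hε : 0 < ε)
    (hεγ : ε < γ) (hγ : γ < 1 / 3) :
    binomTail n ⌈(1 / 2 + ε) * (n : ℝ)⌉₊
      ≤ (n + 1) * exp (6 * (γ ^ 2 - ε ^ 2) * n + 26) * binomTail n ⌈(1 / 2 + γ) * (n : ℝ)⌉₊ := by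
  set a := ⌈(1 / 2 + ε) * (n : ℝ)⌉₊
  set b := ⌈(1 / 2 + γ) * (n : ℝ)⌉₊
  have hn' : (30 : ℝ) ≤ n := by exact_mod_cast hn
  have ha := Nat.le_ceil ((1 / 2 + ε) * (n : ℝ))
  have ha' := Nat.ceil_lt_add_one (by nlinarith : 0 ≤ (1 / 2 + ε) * (n : ℝ))
  have hb' := Nat.ceil_lt_add_one (by nlinarith : 0 ≤ (1 / 2 + γ) * (n : ℝ))
  have hhalf : n ≤ 2 * a := by exact_mod_cast (show (n : ℝ) ≤ 2 * a by nlinarith)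
  have hab : a ≤ b := Nat.ceil_le_ceil (by gcongr)
  have h13 : 15 * b ≤ 13 * n := by exact_mod_cast (show (15 * b : ℝ) ≤ 13 * n by nlinarith)
  have hexp := six_div_mul_sub_mul_le (by linarith) hε.le hγ.le (by exact_mod_cast hab) ha ha' hb'
  calc binomTail n a ≤ (n + 1) * n.choose a := binomTail_le_succ_mul_choose hhalf
    _ ≤ (n + 1) * (exp (6 * (γ ^ 2 - ε ^ 2) * n + 26) * n.choose b) := by
        gcongr
        exact (choose_le_exp_mul_choose hab hhalf h13).trans (by gcongr)
    _ ≤ (n + 1) * exp (6 * (γ ^ 2 - ε ^ 2) * n + 26) * binomTail n b := by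
        rw [← mul_assoc]
        gcongr
        exact choose_le_binomTail (Nat.ceil_le.mpr (by nlinarith))

/-- There is an absolute constant c₀ > 0 such that for every n ≥ 1 and 0 < ε < γ < 1/3,
    for X ~ B(n,1/2): P(X ≥ (1/2+γ)n | X ≥ (1/2+ε)n) ≥ (c₀/n)·e^{−6(γ²−ε²)n},
    where a real threshold t means the event X ≥ ⌈t⌉. -/
theorem stmt4 : ∃ c₀ : ℝ, 0 < c₀ ∧ ∀ n : ℕ, 1 ≤ n → ∀ ε γ : ℝ,
    0 < ε → ε < γ → γ < 1/3 →
    (∑ i ∈ Finset.Icc ⌈(1/2 + γ) * (n : ℝ)⌉₊ n, (n.choose i : ℝ)) /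
        (∑ i ∈ Finset.Icc ⌈(1/2 + ε) * (n : ℝ)⌉₊ n, (n.choose i : ℝ))
      ≥ (c₀ / n) * Real.exp (-(6 * (γ^2 - ε^2) * n)) := by
  refine ⟨exp (-30), exp_pos _, fun n hn ε γ hε hεγ hγ => ?_⟩
  have hn' : (1 : ℝ) ≤ n := by exact_mod_cast hn
  have hbn : ⌈(1 / 2 + γ) * (n : ℝ)⌉₊ ≤ n := Nat.ceil_le.mpr (by nlinarith)
  have hD := binomTail_pos (Nat.ceil_le.mpr (by nlinarith) : ⌈(1 / 2 + ε) * (n : ℝ)⌉₊ ≤ n)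
  change binomTail n _ / binomTail n _ ≥ _
  rw [ge_iff_le, le_div_iff₀ hD]
  rcases le_or_gt n 30 with hsmall | hlarge
  · have hE : exp (-(6 * (γ ^ 2 - ε ^ 2) * n)) ≤ 1 := by
      have : ε ^ 2 ≤ γ ^ 2 := pow_le_pow_left₀ hε.le hεγ.le 2
      exact exp_le_one_iff.mpr (neg_nonpos.mpr (by positivity))
    refine (mul_le_mul_of_nonneg_right ?_ hD.le).trans (exp_neg_thirty_mul_binomTail_le hsmall hbn)
    exact mul_le_of_le_one_right (by positivity) hE |>.trans (div_le_self (exp_pos _).le hn')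
  · have hconst : (n + 1) / n * exp (-4) ≤ 1 := by
      rw [div_mul_eq_mul_div, div_le_one (by positivity), exp_neg, mul_inv_le_iff₀ (exp_pos _)]
      nlinarith [add_one_le_exp 4]
    calc exp (-30) / n * exp (-(6 * (γ ^ 2 - ε ^ 2) * n)) * binomTail n _
        ≤ exp (-30) / n * exp (-(6 * (γ ^ 2 - ε ^ 2) * n))
            * ((n + 1) * exp (6 * (γ ^ 2 - ε ^ 2) * n + 26) * binomTail n _) := by
          gcongr
          exact binomTail_ceil_le_of_thirty_le hlarge.le hε hεγ hγ
      _ = (n + 1) / n * (exp (-30) * exp (-(6 * (γ ^ 2 - ε ^ 2) * n))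
            * exp (6 * (γ ^ 2 - ε ^ 2) * n + 26)) * binomTail n _ := by ring
      _ = (n + 1) / n * exp (-4) * binomTail n _ := by rw [← exp_add, ← exp_add]; ring_nf
      _ ≤ binomTail n _ := mul_le_of_le_one_left (binomTail_pos hbn).le hconst
end

section
/- For every real ε with 0 < ε < 1 there exists w₀ such that for every integer w ≥ w₀, every real R ≥ w³, every torus side length n ≥ 10R, every node x, and every configuration σ on the torus in which σ(y) = +1 for every node y at toroidal Euclidean distance at most R from x, the following holds: no node y at toroidal Euclidean distance at most R from x is unhappy in σ. Consequently, negating the spin of any single unhappy node of σ yields a configuration in which all nodes at Euclidean distance at most R from x still have spin +1. -/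
open scoped Classical

/-! The Schelling model on the n×n torus (ℤ/nℤ)² with window parameter w and
tolerance τ = (1−ε)/2; configurations assign each node a spin in {+1,−1} ⊆ ℤ. -/

/-- Toroidal distance between two elements of ℤ/nℤ. -/
def tdist (n : ℕ) (a b : ZMod n) : ℕ := min (a - b).val (b - a).val

/-- Toroidal ℓ∞ distance between two nodes of the n×n torus. -/
def torusDist (n : ℕ) (x y : ZMod n × ZMod n) : ℕ :=
  max (tdist n x.1 y.1) (tdist n x.2 y.2)

/-- Toroidal Euclidean distance between two nodes of the n×n torus. -/
noncomputable def torusEDist (n : ℕ) (x y : ZMod n × ZMod n) : ℝ :=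
  Real.sqrt ((tdist n x.1 y.1 : ℝ)^2 + (tdist n x.2 y.2 : ℝ)^2)

/-- `N_w(x)`: the set of nodes at toroidal ℓ∞ distance at most `w` from `x`. -/
noncomputable def nbhd (n : ℕ) [NeZero n] (w : ℕ) (x : ZMod n × ZMod n) :
    Finset (ZMod n × ZMod n) :=
  Finset.univ.filter (fun y => torusDist n x y ≤ w)

/-- The bias of node `x` in configuration `σ`: the sum of the spins over `N_w(x)`. -/
noncomputable def bias (n : ℕ) [NeZero n] (w : ℕ) (σ : ZMod n × ZMod n → ℤ)
    (x : ZMod n × ZMod n) : ℤ :=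
  ∑ y ∈ nbhd n w x, σ y

/-- Node `x` is unhappy in `σ` (with tolerance τ = (1−ε)/2) iff
    σ(x)·b_σ(x) < −ε(2w+1)². -/
def Unhappy (n : ℕ) [NeZero n] (w : ℕ) (ε : ℝ) (σ : ZMod n × ZMod n → ℤ)
    (x : ZMod n × ZMod n) : Prop :=
  ((σ x * bias n w σ x : ℤ) : ℝ) < -ε * (2*(w : ℝ) + 1)^2

/-! Let `a ∈ ℤ²` be the displacement from `y` to `x`, so `|a| ≤ R`; as `2w < n`, the window
`N(y)` is a faithful copy of the lattice square `[-w, w]²`. If `|a|∞ < w²`, the whole window lies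
in `B_R(x)`, because `2 (w + w²)² ≤ w⁶ ≤ R²`. Otherwise the half-window `⟨u, a⟩ ≥ w²` lies in
`B_R(x)`, because `|u - a|² = |a|² - 2⟨u, a⟩ + |u|² ≤ R²`; together with its reflection it covers
the square up to the strip `|⟨u, a⟩| < w²`, which meets each line parallel to the `i`-th axis, for
an `i` with `|aᵢ| ≥ w²`, in at most two points. Either way the window has at most `2(2w + 1)` more
nodes than twice its nodes in `B_R(x)`, all of which carry spin `+1`, so
`b_σ(y) ≥ -2(2w + 1) ≥ -ε(2w + 1)²` once `εw ≥ 1`. -/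

open Finset

lemma card_filter_abs_mul_add_lt_le_two (s : Finset ℤ) {a c d : ℤ} (hd : d ≤ |a|) :
    #(s.filter fun i => |i * a + c| < d) ≤ 2 := by
  by_contra! h
  obtain ⟨i, hi, j, hj, k, hk, hij, hik, hjk⟩ := two_lt_card.mp h
  have close : ∀ p ∈ s.filter (fun i => |i * a + c| < d),
      ∀ q ∈ s.filter (fun i => |i * a + c| < d), |p - q| < 2 := by
    intro p hp q hq
    rw [mem_filter] at hp hq
    have : |p - q| * |a| < 2 * |a| := by
      rw [← abs_mul]
      calc |(p - q) * a| = |(p * a + c) - (q * a + c)| := by ring_nf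
        _ ≤ |p * a + c| + |q * a + c| := abs_sub _ _
        _ < 2 * |a| := by linarith [hp.2, hq.2]
    exact lt_of_mul_lt_mul_right this (abs_nonneg a)
  have hij' := abs_lt.mp (close i hi j hj)
  have hik' := abs_lt.mp (close i hi k hk)
  have hjk' := abs_lt.mp (close j hj k hk)
  omega

noncomputable def window (w : ℕ) : Finset (ℤ × ℤ) :=
  Icc (-(w : ℤ)) w ×ˢ Icc (-(w : ℤ)) w

lemma mem_window {w : ℕ} {u : ℤ × ℤ} : u ∈ window w ↔ |u.1| ≤ w ∧ |u.2| ≤ w := by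
  simp only [window, mem_product, mem_Icc, abs_le]

lemma card_filter_window_abs_dot_lt_le {w : ℕ} {a : ℤ × ℤ} {d : ℤ}
    (hd : d ≤ |a.1| ∨ d ≤ |a.2|) :
    #((window w).filter fun u => |u.1 * a.1 + u.2 * a.2| < d) ≤ 2 * (2 * w + 1) := by
  have hI : ∑ _i ∈ Icc (-(w : ℤ)) w, 2 = 2 * (2 * w + 1) := by
    rw [sum_const, Int.card_Icc, smul_eq_mul]; omega
  rw [card_filter, window, ← hI]
  rcases hd with hd | hd
  · rw [sum_product_right]
    refine sum_le_sum fun j _ => ?_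
    rw [← card_filter]
    exact card_filter_abs_mul_add_lt_le_two _ (c := j * a.2) hd
  · rw [sum_product]
    refine sum_le_sum fun i _ => ?_
    rw [← card_filter]
    simp_rw [add_comm (i * a.1)]
    exact card_filter_abs_mul_add_lt_le_two _ (c := i * a.1) hd

lemma card_window_le_two_mul_card_filter_dot_ge_add {w : ℕ} {a : ℤ × ℤ} {d : ℤ}
    (hd : d ≤ |a.1| ∨ d ≤ |a.2|) :
    #(window w) ≤
      2 * #((window w).filter fun u => d ≤ u.1 * a.1 + u.2 * a.2) + 2 * (2 * w + 1) := by
  set G := (window w).filter fun u => d ≤ u.1 * a.1 + u.2 * a.2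
  have hcover : window w ⊆
      ((window w).filter fun u => |u.1 * a.1 + u.2 * a.2| < d) ∪ G ∪ G.image Neg.neg := by
    intro u hu
    simp only [G, mem_union, mem_filter, mem_image]
    by_cases hstrip : |u.1 * a.1 + u.2 * a.2| < d
    · exact Or.inl (Or.inl ⟨hu, hstrip⟩)
    rcases le_abs'.mp (not_lt.mp hstrip) with hneg | hpos
    · refine Or.inr ⟨-u, ⟨?_, ?_⟩, neg_neg u⟩
      · rw [mem_window] at hu ⊢; simpa only [Prod.fst_neg, Prod.snd_neg, abs_neg] using hu
      · simp only [Prod.fst_neg, Prod.snd_neg]; linarith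
    · exact Or.inl (Or.inr ⟨hu, hpos⟩)
  calc #(window w) ≤ _ := card_le_card hcover
    _ ≤ _ := card_union_le _ _
    _ ≤ _ := add_le_add_left (card_union_le _ _) _
    _ ≤ _ := add_le_add (le_refl _) card_image_le
    _ ≤ _ := by linarith [card_filter_window_abs_dot_lt_le (w := w) hd]

lemma two_mul_add_sq_sq_le_pow_three_sq {w : ℝ} (hw : 3 ≤ w) :
    2 * (w + w ^ 2) ^ 2 ≤ (w ^ 3) ^ 2 := by
  have h : 2 * (1 + w) ^ 2 ≤ w ^ 2 * w ^ 2 := by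
    nlinarith [mul_le_mul hw hw (by norm_num) (by positivity)]
  calc 2 * (w + w ^ 2) ^ 2 = w ^ 2 * (2 * (1 + w) ^ 2) := by ring
    _ ≤ w ^ 2 * (w ^ 2 * w ^ 2) := by gcongr
    _ = (w ^ 3) ^ 2 := by ring

lemma card_window_le_two_mul_card_filter_ball_add {w : ℕ} (hw : 3 ≤ w) {R : ℝ}
    (hR : (w : ℝ) ^ 3 ≤ R) {a : ℤ × ℤ} (ha : (a.1 : ℝ) ^ 2 + (a.2 : ℝ) ^ 2 ≤ R ^ 2) :
    #(window w) ≤ 2 * #((window w).filter fun u =>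
      ((u - a).1 : ℝ) ^ 2 + ((u - a).2 : ℝ) ^ 2 ≤ R ^ 2) + 2 * (2 * w + 1) := by
  have hw3 : (3 : ℝ) ≤ w := by exact_mod_cast hw
  by_cases hfar : (w : ℤ) ^ 2 ≤ |a.1| ∨ (w : ℤ) ^ 2 ≤ |a.2|
  · refine (card_window_le_two_mul_card_filter_dot_ge_add hfar).trans ?_
    gcongr 2 * #?_ + _
    intro u hu
    simp only [mem_filter, mem_window] at hu ⊢
    obtain ⟨⟨hu1, hu2⟩, hdot⟩ := hu
    refine ⟨⟨hu1, hu2⟩, ?_⟩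
    have h1 : (u.1 : ℝ) ^ 2 ≤ (w : ℝ) ^ 2 := by
      exact_mod_cast sq_le_sq' (abs_le.mp hu1).1 (abs_le.mp hu1).2
    have h2 : (u.2 : ℝ) ^ 2 ≤ (w : ℝ) ^ 2 := by
      exact_mod_cast sq_le_sq' (abs_le.mp hu2).1 (abs_le.mp hu2).2
    have hdot' : ((w : ℝ) ^ 2) ≤ u.1 * a.1 + u.2 * a.2 := by exact_mod_cast hdot
    simp only [Prod.fst_sub, Prod.snd_sub, Int.cast_sub]
    nlinarith
  · simp only [not_or, not_le] at hfar
    have hin : ∀ u ∈ window w,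
        ((u - a).1 : ℝ) ^ 2 + ((u - a).2 : ℝ) ^ 2 ≤ R ^ 2 := by
      intro u hu
      rw [mem_window] at hu
      have hcoord : ∀ i j : ℤ, |i| ≤ w → |j| < (w : ℤ) ^ 2 →
          ((i - j : ℤ) : ℝ) ^ 2 ≤ ((w : ℝ) + (w : ℝ) ^ 2) ^ 2 := by
        intro i j hi hj
        have : |i - j| ≤ (w : ℤ) + (w : ℤ) ^ 2 := (abs_sub _ _).trans (by linarith)
        have : |((i - j : ℤ) : ℝ)| ≤ (w : ℝ) + (w : ℝ) ^ 2 := by exact_mod_cast this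
        exact sq_le_sq' (abs_le.mp this).1 (abs_le.mp this).2
      have hR2 : ((w : ℝ) ^ 3) ^ 2 ≤ R ^ 2 := pow_le_pow_left₀ (by positivity) hR 2
      have hw6 := two_mul_add_sq_sq_le_pow_three_sq hw3
      simp only [Prod.fst_sub, Prod.snd_sub]
      linarith [hcoord _ _ hu.1 hfar.1, hcoord _ _ hu.2 hfar.2]
    rw [filter_true_of_mem hin]
    omega

lemma tdist_comm (n : ℕ) (a b : ZMod n) : tdist n a b = tdist n b a := min_comm _ _

lemma torusEDist_comm (n : ℕ) (x y : ZMod n × ZMod n) :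
    torusEDist n x y = torusEDist n y x := by
  rw [torusEDist, torusEDist, tdist_comm n x.1, tdist_comm n x.2]

lemma tdist_eq_natAbs_valMinAbs {n : ℕ} [NeZero n] (a b : ZMod n) :
    tdist n a b = (b - a).valMinAbs.natAbs := by
  rw [tdist, ZMod.valMinAbs_natAbs_eq_min, ← neg_sub, ZMod.neg_val]
  split_ifs with h
  · simp [h]
  · exact min_comm _ _

lemma tdist_eq_natAbs_of_intCast_eq {n : ℕ} [NeZero n] {a b : ZMod n} {m : ℤ}
    (hm : (m : ZMod n) = b - a) (hmn : 2 * m.natAbs ≤ n) : tdist n a b = m.natAbs := by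
  rw [tdist_eq_natAbs_valMinAbs]
  refine le_antisymm ?_ ?_
  · exact ZMod.natAbs_min_of_le_div_two n _ _ (by rw [ZMod.coe_valMinAbs, hm])
      (ZMod.natAbs_valMinAbs_le _)
  · exact ZMod.natAbs_min_of_le_div_two n _ _ (by rw [ZMod.coe_valMinAbs, hm])
      (by omega)

lemma torusEDist_eq_sqrt_of_intCast_eq {n : ℕ} [NeZero n] {x y : ZMod n × ZMod n}
    {m : ℤ × ℤ} (hm₁ : (m.1 : ZMod n) = y.1 - x.1) (hm₂ : (m.2 : ZMod n) = y.2 - x.2)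
    (hmn₁ : 2 * m.1.natAbs ≤ n) (hmn₂ : 2 * m.2.natAbs ≤ n) :
    torusEDist n x y = √((m.1 : ℝ) ^ 2 + (m.2 : ℝ) ^ 2) := by
  rw [torusEDist, tdist_eq_natAbs_of_intCast_eq hm₁ hmn₁,
    tdist_eq_natAbs_of_intCast_eq hm₂ hmn₂, Nat.cast_natAbs, Nat.cast_natAbs]
  simp only [Int.cast_abs, sq_abs]

lemma valMinAbs_sq_add_sq_le_of_torusEDist_le {n : ℕ} [NeZero n] {x y : ZMod n × ZMod n}
    {R : ℝ} (h : torusEDist n x y ≤ R) :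
    ((y.1 - x.1).valMinAbs : ℝ) ^ 2 + ((y.2 - x.2).valMinAbs : ℝ) ^ 2 ≤ R ^ 2 := by
  have hn : ∀ c : ZMod n, 2 * c.valMinAbs.natAbs ≤ n := fun c => by
    have := ZMod.natAbs_valMinAbs_le c; omega
  rw [torusEDist_eq_sqrt_of_intCast_eq (m := ((y.1 - x.1).valMinAbs, (y.2 - x.2).valMinAbs))
    (ZMod.coe_valMinAbs _) (ZMod.coe_valMinAbs _) (hn _) (hn _)] at h
  exact (Real.sqrt_le_left (le_trans (Real.sqrt_nonneg _) h)).mp h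

lemma intCast_injOn_Icc {n w : ℕ} (hw : 2 * w < n) :
    Set.InjOn (fun i : ℤ => (i : ZMod n)) (Icc (-(w : ℤ)) w) := by
  intro i hi j hj hij
  simp only [coe_Icc, Set.mem_Icc] at hi hj
  have hdvd : (n : ℤ) ∣ j - i := (ZMod.intCast_eq_intCast_iff_dvd_sub i j n).mp hij
  have := Int.eq_zero_of_abs_lt_dvd hdvd (by rw [abs_lt]; omega)
  omega

lemma nbhd_eq_image_window {n w : ℕ} [NeZero n] (hw : 2 * w < n) (y : ZMod n × ZMod n) :
    nbhd n w y = (window w).image fun u => y + ((u.1 : ZMod n), (u.2 : ZMod n)) := by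
  ext z
  simp only [nbhd, torusDist, mem_filter, mem_univ, true_and, sup_le_iff, mem_image,
    mem_window]
  constructor
  · rintro ⟨h₁, h₂⟩
    refine ⟨((z.1 - y.1).valMinAbs, (z.2 - y.2).valMinAbs), ⟨?_, ?_⟩, ?_⟩
    · rw [tdist_eq_natAbs_valMinAbs] at h₁; rw [Int.abs_eq_natAbs]; exact_mod_cast h₁
    · rw [tdist_eq_natAbs_valMinAbs] at h₂; rw [Int.abs_eq_natAbs]; exact_mod_cast h₂
    · simp only [ZMod.coe_valMinAbs]
      exact Prod.ext (add_sub_cancel _ _) (add_sub_cancel _ _)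
  · rintro ⟨u, ⟨hu₁, hu₂⟩, rfl⟩
    rw [Int.abs_eq_natAbs] at hu₁ hu₂
    simp only [Prod.fst_add, Prod.snd_add]
    rw [tdist_eq_natAbs_of_intCast_eq (add_sub_cancel_left _ _).symm (by omega),
      tdist_eq_natAbs_of_intCast_eq (add_sub_cancel_left _ _).symm (by omega)]
    omega

lemma bias_eq_sum_window {n w : ℕ} [NeZero n] (hw : 2 * w < n) (σ : ZMod n × ZMod n → ℤ)
    (y : ZMod n × ZMod n) :
    bias n w σ y = ∑ u ∈ window w, σ (y + ((u.1 : ZMod n), (u.2 : ZMod n))) := by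
  rw [bias, nbhd_eq_image_window hw, sum_image]
  intro u hu v hv huv
  simp only [mem_coe, window, mem_product] at hu hv
  simp only [add_right_inj, Prod.mk.injEq] at huv
  exact Prod.ext (intCast_injOn_Icc hw hu.1 hv.1 huv.1)
    (intCast_injOn_Icc hw hu.2 hv.2 huv.2)

lemma two_mul_card_filter_sub_card_le_sum {α : Type*} {s : Finset α} {f : α → ℤ}
    {p : α → Prop} [DecidablePred p] (hf : ∀ u ∈ s, -1 ≤ f u) (hp : ∀ u ∈ s, p u → f u = 1) :
    2 * #(s.filter p) - #s ≤ ∑ u ∈ s, f u := by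
  calc 2 * (#(s.filter p) : ℤ) - #s = ∑ u ∈ s, (2 * (if p u then 1 else 0) - 1) := by
        rw [sum_sub_distrib, ← mul_sum, sum_boole, sum_const, nsmul_one]
    _ ≤ ∑ u ∈ s, f u := sum_le_sum fun u hu => by
        split_ifs with h
        · rw [hp u hu h]; norm_num
        · linarith [hf u hu]

lemma neg_le_bias_of_torusEDist_le {n w : ℕ} [NeZero n] (hw : 3 ≤ w) {R : ℝ}
    (hR : (w : ℝ) ^ 3 ≤ R) (hn : 10 * R ≤ n) {x y : ZMod n × ZMod n}
    {σ : ZMod n × ZMod n → ℤ} (hσ : ∀ z, -1 ≤ σ z)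
    (hball : ∀ z, torusEDist n x z ≤ R → σ z = 1) (hy : torusEDist n x y ≤ R) :
    -(2 * (2 * w + 1) : ℤ) ≤ bias n w σ y := by
  have hw1 : (1 : ℝ) ≤ w := by exact_mod_cast (by omega : 1 ≤ w)
  have hwR : (w : ℝ) ≤ R := (le_self_pow₀ hw1 (by norm_num)).trans hR
  have hsmall : ∀ m : ℤ, |(m : ℝ)| ≤ R + w → 2 * m.natAbs ≤ n := fun m hm => by
    have : ((2 * m.natAbs : ℕ) : ℝ) ≤ n := by
      push_cast [Nat.cast_natAbs, Int.cast_abs]; linarith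
    exact_mod_cast this
  have h2w : 2 * w < n := by exact_mod_cast (show ((2 * w : ℕ) : ℝ) < n by push_cast; linarith)
  set a : ℤ × ℤ := ((x.1 - y.1).valMinAbs, (x.2 - y.2).valMinAbs) with ha_def
  have ha : (a.1 : ℝ) ^ 2 + (a.2 : ℝ) ^ 2 ≤ R ^ 2 :=
    valMinAbs_sq_add_sq_le_of_torusEDist_le (torusEDist_comm n x y ▸ hy)
  have hR0 : 0 ≤ R := by linarith
  have hshift : ∀ u ∈ window w, ((u - a).1 : ℝ) ^ 2 + ((u - a).2 : ℝ) ^ 2 ≤ R ^ 2 →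
      σ (y + ((u.1 : ZMod n), (u.2 : ZMod n))) = 1 := by
    intro u hu hua
    rw [mem_window] at hu
    have hcoord : ∀ i j : ℤ, |i| ≤ w → j ^ 2 ≤ R ^ 2 → 2 * (i - j).natAbs ≤ n := by
      intro i j hi hj
      refine hsmall _ ?_
      have hi' : |(i : ℝ)| ≤ w := by exact_mod_cast hi
      have hj' : |(j : ℝ)| ≤ R := abs_le_of_sq_le_sq (by exact_mod_cast hj) hR0
      push_cast
      linarith [abs_sub (i : ℝ) j]
    apply hball
    rw [torusEDist_eq_sqrt_of_intCast_eq (m := u - a) ?_ ?_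
      (hcoord _ _ hu.1 (by nlinarith)) (hcoord _ _ hu.2 (by nlinarith))]
    · exact Real.sqrt_le_left hR0 |>.mpr hua
    · simp only [ha_def, Prod.fst_sub, Prod.fst_add, Int.cast_sub, ZMod.coe_valMinAbs]; ring
    · simp only [ha_def, Prod.snd_sub, Prod.snd_add, Int.cast_sub, ZMod.coe_valMinAbs]; ring
  have hcount := card_window_le_two_mul_card_filter_ball_add hw hR ha
  rw [bias_eq_sum_window h2w]
  calc -(2 * (2 * w + 1) : ℤ) ≤ 2 * #((window w).filter fun u =>
        ((u - a).1 : ℝ) ^ 2 + ((u - a).2 : ℝ) ^ 2 ≤ R ^ 2) - #(window w) := by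
        omega
    _ ≤ _ := two_mul_card_filter_sub_card_le_sum (fun z _ => hσ _) hshift

lemma not_unhappy_of_neg_le_bias {n w : ℕ} [NeZero n] {ε : ℝ} (hεw : 1 ≤ ε * w)
    {σ : ZMod n × ZMod n → ℤ} {y : ZMod n × ZMod n} (hσy : σ y = 1)
    (hb : -(2 * (2 * w + 1) : ℤ) ≤ bias n w σ y) : ¬ Unhappy n w ε σ y := by
  have hb' : -(2 * (2 * w + 1) : ℝ) ≤ bias n w σ y := by exact_mod_cast hb
  rw [Unhappy, hσy, one_mul, not_lt]
  nlinarith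

theorem stmt6_general (ε : ℝ) (hε : 0 < ε) :
    ∃ w₀ : ℕ, ∀ w : ℕ, w₀ ≤ w → ∀ R : ℝ, (w : ℝ)^3 ≤ R →
    ∀ (n : ℕ) [NeZero n], 10 * R ≤ (n : ℝ) →
    ∀ x : ZMod n × ZMod n, ∀ σ : ZMod n × ZMod n → ℤ,
    (∀ y, σ y = 1 ∨ σ y = -1) →
    (∀ y, torusEDist n x y ≤ R → σ y = 1) →
    (∀ y, torusEDist n x y ≤ R → ¬ Unhappy n w ε σ y) ∧
    (∀ v, Unhappy n w ε σ v →
      ∀ y, torusEDist n x y ≤ R → Function.update σ v (-(σ v)) y = 1) := by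
  refine ⟨max 3 ⌈ε⁻¹⌉₊, fun w hw R hR n _ hn x σ hspin hball => ?_⟩
  have hεw : 1 ≤ ε * w := by
    have : ε⁻¹ ≤ w := (Nat.le_ceil _).trans (by exact_mod_cast le_of_max_le_right hw)
    rwa [inv_le_iff_one_le_mul₀' hε] at this
  have hσ : ∀ z, -1 ≤ σ z := fun z => by rcases hspin z with h | h <;> omega
  have happy : ∀ y, torusEDist n x y ≤ R → ¬ Unhappy n w ε σ y := fun y hy =>
    not_unhappy_of_neg_le_bias hεw (hball y hy)
      (neg_le_bias_of_torusEDist_le (le_of_max_le_left hw) hR hn hσ hball hy)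
  refine ⟨happy, fun v hv y hy => ?_⟩
  rw [Function.update_of_ne (by rintro rfl; exact happy y hy hv)]
  exact hball y hy

/-- For every 0 < ε < 1 there is w₀ such that for every w ≥ w₀, every real R ≥ w³,
    every torus side n ≥ 10R, every node x, and every configuration σ with spin +1 on
    every node at toroidal Euclidean distance ≤ R from x: no node at Euclidean distance
    ≤ R from x is unhappy in σ; consequently, negating the spin of any single unhappy
    node yields a configuration in which all nodes at Euclidean distance ≤ R from x
    still have spin +1. -/
theorem stmt6 (ε : ℝ) (hε : 0 < ε) (hε1 : ε < 1) :
    ∃ w₀ : ℕ, ∀ w : ℕ, w₀ ≤ w → ∀ R : ℝ, (w : ℝ)^3 ≤ R →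
    ∀ (n : ℕ) [NeZero n], 10 * R ≤ (n : ℝ) →
    ∀ x : ZMod n × ZMod n, ∀ σ : ZMod n × ZMod n → ℤ,
    (∀ y, σ y = 1 ∨ σ y = -1) →
    (∀ y, torusEDist n x y ≤ R → σ y = 1) →
    (∀ y, torusEDist n x y ≤ R → ¬ Unhappy n w ε σ y) ∧
    (∀ v, Unhappy n w ε σ v →
      ∀ y, torusEDist n x y ≤ R → Function.update σ v (-(σ v)) y = 1) :=
  stmt6_general ε hε
end

section
/- For every real ε with 0 < ε < 1 there exists w₀ such that for every integer w ≥ w₀, every real R ≥ w³, every point x ∈ ℝ², and every lattice point v ∈ ℤ² with ‖v − x‖₂ ≤ R, the number of lattice points z ∈ ℤ² with ‖z − v‖_∞ ≤ w and ‖z − x‖₂ ≤ R is at least ((1−ε)/2)·(2w+1)². -/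
/-!
Translate so that `v = 0`, write `d = z - v` and `u = (a, b) = x - v`. If `|a|, |b| < 2w²`, the
whole square lies in the disc, because `w³ ≥ √2 (2w² + w)` for `w ≥ 4`. Otherwise, since
`|d - u|² = |d|² - 2⟪d, u⟫ + |u|² ≤ 2w² - 2⟪d, u⟫ + R²`, every `d` with `⟪d, u⟫ ≥ w²` lies in the
disc. By `d ↦ -d` these are as many as those with `⟪d, u⟫ ≤ -w²`, and the strip `|⟪d, u⟫| < w²`
is thinner than `1` along a coordinate axis on which `u` has a component of size at least `2w²`,
so it meets each lattice line parallel to that axis at most once. Hence twice the count is at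
least `(2w + 1)² - (2w + 1)`, which is at least `(1 - ε)(2w + 1)²` once `2w + 1 ≥ 1/ε`.
-/

open Finset

lemma Int.eq_of_abs_mul_add_lt {m n : ℤ} {a c t : ℝ} (hm : |m * a + c| < t)
    (hn : |n * a + c| < t) (ht : 2 * t ≤ |a|) : m = n := by
  by_contra hmn
  have h1 : (1 : ℝ) ≤ |(m : ℝ) - n| := by
    rw [← Int.cast_sub, ← Int.cast_abs]
    exact_mod_cast Int.one_le_abs (sub_ne_zero.2 hmn)
  have h2 : |((m : ℝ) - n) * a| < 2 * t := by
    rw [sub_mul, show (m : ℝ) * a - n * a = (m * a + c) - (n * a + c) by ring]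
    exact (abs_sub _ _).trans_lt (by linarith)
  rw [abs_mul] at h2
  nlinarith [abs_nonneg a]

noncomputable def latticeSquare (w : ℕ) : Finset (ℤ × ℤ) := Icc (-(w : ℤ), -(w : ℤ)) (w, w)

namespace latticeSquare

variable {w : ℕ} {d : ℤ × ℤ} {a b t : ℝ}

lemma mem_iff : d ∈ latticeSquare w ↔ |d.1| ≤ w ∧ |d.2| ≤ w := by
  simp only [latticeSquare, mem_Icc, Prod.le_def, abs_le]
  tauto

lemma card_eq (w : ℕ) : #(latticeSquare w) = (2 * w + 1) ^ 2 := by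
  rw [latticeSquare, Icc_prod_def, card_product, Int.card_Icc, sq]
  congr <;> omega

lemma map_addLeftEmbedding (w : ℕ) (v : ℤ × ℤ) :
    (latticeSquare w).map (addLeftEmbedding v) = Icc (v.1 - w, v.2 - w) (v.1 + w, v.2 + w) := by
  rw [latticeSquare, map_add_left_Icc]
  rfl

lemma neg_mem (hd : d ∈ latticeSquare w) : -d ∈ latticeSquare w := by
  rw [mem_iff] at hd ⊢
  simpa only [Prod.fst_neg, Prod.snd_neg, abs_neg] using hd

lemma sq_add_sq_le (hd : d ∈ latticeSquare w) :
    (d.1 : ℝ) ^ 2 + (d.2 : ℝ) ^ 2 ≤ 2 * (w : ℝ) ^ 2 := by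
  obtain ⟨h1, h2⟩ := mem_iff.1 hd
  have h1' : |(d.1 : ℝ)| ≤ w := by exact_mod_cast h1
  have h2' : |(d.2 : ℝ)| ≤ w := by exact_mod_cast h2
  nlinarith [sq_le_sq' (abs_le.1 h1').1 (abs_le.1 h1').2,
    sq_le_sq' (abs_le.1 h2').1 (abs_le.1 h2').2]

lemma card_filter_le_linear_eq_card_filter_linear_le_neg :
    #{d ∈ latticeSquare w | t ≤ d.1 * a + d.2 * b} =
      #{d ∈ latticeSquare w | (d.1 : ℝ) * a + d.2 * b ≤ -t} := by
  refine card_nbij' Neg.neg Neg.neg ?_ ?_ (fun d _ ↦ neg_neg d) (fun d _ ↦ neg_neg d) <;>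
  · intro d hd
    simp only [coe_filter, Set.mem_ofPred_eq, Prod.fst_neg, Prod.snd_neg, Int.cast_neg] at hd ⊢
    exact ⟨neg_mem hd.1, by linarith [hd.2]⟩

lemma card_filter_abs_linear_lt_le_of_two_mul_le (ht : 2 * t ≤ |a| ∨ 2 * t ≤ |b|) :
    #{d ∈ latticeSquare w | |(d.1 : ℝ) * a + d.2 * b| < t} ≤ 2 * w + 1 := by
  have hIcc : #(Icc (-(w : ℤ)) w) = 2 * w + 1 := by rw [Int.card_Icc]; omega
  rw [← hIcc]
  rcases ht with ha | hb
  · refine card_le_card_of_injOn Prod.snd (fun d hd ↦ ?_) fun d hd d' hd' hdd' ↦ ?_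
    · simp only [mem_coe, mem_filter, mem_iff] at hd
      simpa [mem_Icc, abs_le] using hd.1.2
    · simp only [coe_filter, Set.mem_ofPred_eq] at hd hd'
      rw [hdd'] at hd
      exact Prod.ext (Int.eq_of_abs_mul_add_lt hd.2 hd'.2 ha) hdd'
  · refine card_le_card_of_injOn Prod.fst (fun d hd ↦ ?_) fun d hd d' hd' hdd' ↦ ?_
    · simp only [mem_coe, mem_filter, mem_iff] at hd
      simpa [mem_Icc, abs_le] using hd.1.1
    · simp only [coe_filter, Set.mem_ofPred_eq, add_comm (_ * a)] at hd hd'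
      rw [hdd'] at hd
      exact Prod.ext hdd' (Int.eq_of_abs_mul_add_lt hd.2 hd'.2 hb)

end latticeSquare

section Disc

variable {a b R : ℝ} {w : ℕ} {d : ℤ × ℤ}

lemma sub_sq_add_sub_sq_le_of_sq_le_linear (hab : a ^ 2 + b ^ 2 ≤ R ^ 2)
    (hd : d ∈ latticeSquare w) (h : (w : ℝ) ^ 2 ≤ d.1 * a + d.2 * b) :
    (d.1 - a) ^ 2 + (d.2 - b) ^ 2 ≤ R ^ 2 := by
  nlinarith [latticeSquare.sq_add_sq_le hd]

lemma sub_sq_add_sub_sq_le_of_abs_lt (hw : 4 ≤ w) (hR : (w : ℝ) ^ 3 ≤ R)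
    (ha : |a| < 2 * (w : ℝ) ^ 2) (hb : |b| < 2 * (w : ℝ) ^ 2) (hd : d ∈ latticeSquare w) :
    (d.1 - a) ^ 2 + (d.2 - b) ^ 2 ≤ R ^ 2 := by
  have hw' : (4 : ℝ) ≤ w := by exact_mod_cast hw
  obtain ⟨h1, h2⟩ := latticeSquare.mem_iff.1 hd
  have h1' : |(d.1 : ℝ)| ≤ w := by exact_mod_cast h1
  have h2' : |(d.2 : ℝ)| ≤ w := by exact_mod_cast h2
  have e1 : (d.1 - a) ^ 2 ≤ (2 * (w : ℝ) ^ 2 + w) ^ 2 :=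
    sq_le_sq' (by linarith [abs_le.1 h1', abs_lt.1 ha]) (by linarith [abs_le.1 h1', abs_lt.1 ha])
  have e2 : (d.2 - b) ^ 2 ≤ (2 * (w : ℝ) ^ 2 + w) ^ 2 :=
    sq_le_sq' (by linarith [abs_le.1 h2', abs_lt.1 hb]) (by linarith [abs_le.1 h2', abs_lt.1 hb])
  have e3 : 2 * (2 * (w : ℝ) ^ 2 + w) ^ 2 ≤ ((w : ℝ) ^ 3) ^ 2 :=
    calc 2 * (2 * (w : ℝ) ^ 2 + w) ^ 2 = (w : ℝ) ^ 2 * (2 * (2 * w + 1) ^ 2) := by ring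
      _ ≤ (w : ℝ) ^ 2 * (w ^ 2 * w ^ 2) := by
        have h16 : (16 : ℝ) ≤ w ^ 2 := by nlinarith
        nlinarith [mul_le_mul_of_nonneg_left h16 (sq_nonneg (w : ℝ))]
      _ = ((w : ℝ) ^ 3) ^ 2 := by ring
  nlinarith [pow_le_pow_left₀ (by positivity) hR 2]

lemma sq_le_two_mul_card_filter_disc_add_of_far (hab : a ^ 2 + b ^ 2 ≤ R ^ 2)
    (hfar : 2 * (w : ℝ) ^ 2 ≤ |a| ∨ 2 * (w : ℝ) ^ 2 ≤ |b|) :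
    (2 * w + 1) ^ 2 ≤
      2 * #{d ∈ latticeSquare w | (d.1 - a) ^ 2 + (d.2 - b) ^ 2 ≤ R ^ 2} + (2 * w + 1) := by
  set pos := {d ∈ latticeSquare w | (w : ℝ) ^ 2 ≤ d.1 * a + d.2 * b}
  set neg := {d ∈ latticeSquare w | (d.1 : ℝ) * a + d.2 * b ≤ -(w : ℝ) ^ 2}
  set strip := {d ∈ latticeSquare w | |(d.1 : ℝ) * a + d.2 * b| < (w : ℝ) ^ 2}
  have hcover : latticeSquare w ⊆ pos ∪ neg ∪ strip := by
    intro d hd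
    simp only [pos, neg, strip, mem_union, mem_filter, abs_lt, hd, true_and]
    by_contra! h
    linarith [h.1.1, h.1.2, h.2 (by linarith [h.1.2])]
  have hpos : pos ⊆ {d ∈ latticeSquare w | (d.1 - a) ^ 2 + (d.2 - b) ^ 2 ≤ R ^ 2} :=
    monotone_filter_right _ fun d hd h ↦ sub_sq_add_sub_sq_le_of_sq_le_linear hab hd h
  have hneg : #neg = #pos :=
    latticeSquare.card_filter_le_linear_eq_card_filter_linear_le_neg.symm
  have hstrip : #strip ≤ 2 * w + 1 :=
    latticeSquare.card_filter_abs_linear_lt_le_of_two_mul_le hfar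
  calc (2 * w + 1) ^ 2 = #(latticeSquare w) := (latticeSquare.card_eq w).symm
    _ ≤ #(pos ∪ neg ∪ strip) := card_le_card hcover
    _ ≤ #pos + #neg + #strip := (card_union_le _ _).trans (by gcongr; exact card_union_le _ _)
    _ ≤ _ := by have := card_le_card hpos; omega

lemma sq_le_two_mul_card_filter_disc_add (hw : 4 ≤ w) (hR : (w : ℝ) ^ 3 ≤ R)
    (hab : a ^ 2 + b ^ 2 ≤ R ^ 2) :
    (2 * w + 1) ^ 2 ≤
      2 * #{d ∈ latticeSquare w | (d.1 - a) ^ 2 + (d.2 - b) ^ 2 ≤ R ^ 2} + (2 * w + 1) := by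
  by_cases hfar : 2 * (w : ℝ) ^ 2 ≤ |a| ∨ 2 * (w : ℝ) ^ 2 ≤ |b|
  · exact sq_le_two_mul_card_filter_disc_add_of_far hab hfar
  push Not at hfar
  rw [filter_true_of_mem fun d hd ↦ sub_sq_add_sub_sq_le_of_abs_lt hw hR hfar.1 hfar.2 hd,
    latticeSquare.card_eq]
  nlinarith

end Disc

theorem stmt7_general (ε : ℝ) (hε : 0 < ε) :
    ∃ w₀ : ℕ, ∀ w : ℕ, w₀ ≤ w → ∀ R : ℝ, (w : ℝ)^3 ≤ R → ∀ x : ℝ × ℝ, ∀ v : ℤ × ℤ,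
    Real.sqrt (((v.1 : ℝ) - x.1)^2 + ((v.2 : ℝ) - x.2)^2) ≤ R →
    (((Finset.Icc (v.1 - w, v.2 - w) (v.1 + w, v.2 + w)).filter
        (fun z : ℤ × ℤ =>
          Real.sqrt (((z.1 : ℝ) - x.1)^2 + ((z.2 : ℝ) - x.2)^2) ≤ R)).card : ℝ)
      ≥ ((1 - ε)/2) * (2*(w : ℝ) + 1)^2 := by
  refine ⟨max 4 ⌈ε⁻¹⌉₊, fun w hw R hR x v hv ↦ ?_⟩
  have hR0 : 0 ≤ R := (Real.sqrt_nonneg _).trans hv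
  have hab : (x.1 - v.1) ^ 2 + (x.2 - v.2) ^ 2 ≤ R ^ 2 := by
    rw [← Real.sqrt_le_left hR0]; convert hv using 2; ring
  have hcount := sq_le_two_mul_card_filter_disc_add (le_of_max_le_left hw) hR hab
  have hεw : 1 ≤ ε * (2 * w + 1) := by
    have : ε⁻¹ ≤ w := (Nat.le_ceil _).trans (by exact_mod_cast le_of_max_le_right hw)
    rw [inv_le_iff_one_le_mul₀ hε] at this
    linarith
  have htranslate :
      {d ∈ latticeSquare w | (d.1 - (x.1 - v.1)) ^ 2 + (d.2 - (x.2 - v.2)) ^ 2 ≤ R ^ 2} =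
        (latticeSquare w).filter
          ((fun z : ℤ × ℤ ↦ √(((z.1 : ℝ) - x.1) ^ 2 + ((z.2 : ℝ) - x.2) ^ 2) ≤ R) ∘
            addLeftEmbedding v) := by
    refine filter_congr fun d _ ↦ ?_
    simp only [Function.comp_apply, addLeftEmbedding_apply, Prod.fst_add, Prod.snd_add,
      Int.cast_add, Real.sqrt_le_left hR0]
    ring_nf
  rw [← latticeSquare.map_addLeftEmbedding, filter_map, card_map, ← htranslate]
  have hcountℝ := (Nat.cast_le (α := ℝ)).2 hcount
  push_cast at hcountℝ
  nlinarith

/-- For every 0 < ε < 1 there exists w₀ such that for every w ≥ w₀, R ≥ w³, x ∈ ℝ²,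
    and lattice point v with ‖v − x‖₂ ≤ R, the number of lattice points z with
    ‖z − v‖_∞ ≤ w and ‖z − x‖₂ ≤ R is at least ((1−ε)/2)(2w+1)². -/
theorem stmt7 (ε : ℝ) (hε : 0 < ε) (hε1 : ε < 1) :
    ∃ w₀ : ℕ, ∀ w : ℕ, w₀ ≤ w → ∀ R : ℝ, (w : ℝ)^3 ≤ R → ∀ x : ℝ × ℝ, ∀ v : ℤ × ℤ,
    Real.sqrt (((v.1 : ℝ) - x.1)^2 + ((v.2 : ℝ) - x.2)^2) ≤ R →
    (((Finset.Icc (v.1 - w, v.2 - w) (v.1 + w, v.2 + w)).filter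
        (fun z : ℤ × ℤ =>
          Real.sqrt (((z.1 : ℝ) - x.1)^2 + ((z.2 : ℝ) - x.2)^2) ≤ R)).card : ℝ)
      ≥ ((1 - ε)/2) * (2*(w : ℝ) + 1)^2 :=
  stmt7_general ε hε
end

section
/- There exists an absolute constant C > 0 such that for every integer w ≥ 1, every real R ≥ w³, every center x ∈ ℝ², and every point v ∈ ℝ² with ‖v − x‖₂ = R, the number of lattice points z ∈ ℤ² satisfying ‖z − v‖_∞ ≤ w, ‖z − x‖₂ > R, and ⟨z − v, x − v⟩ > 0 (i.e., z lies strictly outside the disc of radius R about x but strictly on the same side of the tangent line at v as the disc) is at most C·w. -/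
open scoped Classical

/-!
Write `u = x - v`, so that `‖u‖₂ = R`. Expanding `‖z - x‖₂² = ‖z - v‖₂² - 2⟨z - v, u⟩ + R²` shows
that a lattice point outside the disc has `2⟨z - v, u⟩ < ‖z - v‖₂² ≤ 2w² ≤ 2R`, so the points counted
lie in the strip `0 < ⟨z - v, u⟩ < R`, of width one. Some coordinate of `u` has
`2|uᵢ| ≥ R`; along each of the `2w + 1` lattice lines transversal to that coordinate the strip
then contains at most two lattice points.
-/

open Set

theorem Int.card_le_two_of_abs_sub_lt_two {s : Finset ℤ} (hs : ∀ k ∈ s, ∀ l ∈ s, |k - l| < 2) :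
    s.card ≤ 2 := by
  obtain rfl | hne := s.eq_empty_or_nonempty
  · simp
  have hsub : s ⊆ Finset.Icc (s.min' hne) (s.min' hne + 1) := fun k hk => by
    have hmin := s.min'_le k hk
    have hdist := abs_lt.mp (hs k hk _ (s.min'_mem hne))
    exact Finset.mem_Icc.mpr ⟨hmin, by omega⟩
  have := Finset.card_le_card hsub
  rw [Int.card_Icc] at this
  omega

theorem Int.card_le_of_abs_sub_le {s : Finset ℤ} {a : ℝ} {w : ℕ}
    (hs : ∀ k ∈ s, |(k : ℝ) - a| ≤ w) : s.card ≤ 2 * w + 1 := by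
  have hsub : s ⊆ Finset.Icc (⌈a⌉ - w) (⌊a⌋ + w) := fun k hk => by
    obtain ⟨hlo, hhi⟩ := abs_le.mp (hs k hk)
    have h₁ : ⌈a⌉ ≤ k + w := Int.ceil_le.mpr (by push_cast; linarith)
    have h₂ : k - w ≤ ⌊a⌋ := Int.le_floor.mpr (by push_cast; linarith)
    exact Finset.mem_Icc.mpr ⟨by omega, by omega⟩
  have := Int.floor_le_ceil a
  have := Finset.card_le_card hsub
  rw [Int.card_Icc] at this
  omega

theorem card_le_two_of_mul_mem_Ioo {s : Finset ℤ} {c t h : ℝ} (hc : h ≤ 2 * |c|)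
    (hs : ∀ k ∈ s, (k : ℝ) * c ∈ Ioo t (t + h)) : s.card ≤ 2 := by
  refine Int.card_le_two_of_abs_sub_lt_two fun k hk l hl => ?_
  obtain ⟨hk₁, hk₂⟩ := hs k hk
  obtain ⟨hl₁, hl₂⟩ := hs l hl
  have hlt : |((k - l : ℤ) : ℝ)| * |c| < 2 * |c| := by
    rw [← abs_mul, abs_lt]; push_cast; constructor <;> linarith
  exact_mod_cast lt_of_mul_lt_mul_right hlt (abs_nonneg c)

theorem card_le_two_mul_card_image_snd {s : Finset (ℤ × ℤ)} {c₁ c₂ t h : ℝ}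
    (hc : h ≤ 2 * |c₁|) (hs : ∀ z ∈ s, (z.1 : ℝ) * c₁ + z.2 * c₂ ∈ Ioo t (t + h)) :
    s.card ≤ 2 * (s.image Prod.snd).card := by
  refine Finset.card_le_mul_card_image s 2 fun r _ => ?_
  set row := s.filter fun z => z.2 = r
  have hinj : InjOn Prod.fst (row : Set (ℤ × ℤ)) := fun z hz z' hz' h =>
    Prod.ext h ((Finset.mem_filter.mp hz).2.trans (Finset.mem_filter.mp hz').2.symm)
  rw [← Finset.card_image_of_injOn hinj]
  refine card_le_two_of_mul_mem_Ioo (t := t - r * c₂) hc fun k hk => ?_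
  obtain ⟨z, hz, rfl⟩ := Finset.mem_image.mp hk
  obtain ⟨hzs, rfl⟩ := Finset.mem_filter.mp hz
  obtain ⟨h₁, h₂⟩ := hs z hzs
  constructor <;> linarith

theorem card_le_two_mul_card_image_fst {s : Finset (ℤ × ℤ)} {c₁ c₂ t h : ℝ}
    (hc : h ≤ 2 * |c₂|) (hs : ∀ z ∈ s, (z.1 : ℝ) * c₁ + z.2 * c₂ ∈ Ioo t (t + h)) :
    s.card ≤ 2 * (s.image Prod.fst).card := by
  have hswap : ∀ z ∈ s.image Prod.swap, (z.1 : ℝ) * c₂ + z.2 * c₁ ∈ Ioo t (t + h) :=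
    Finset.forall_mem_image.mpr fun z hz => by simpa [add_comm] using hs z hz
  simpa [Finset.card_image_of_injective s Prod.swap_injective, Finset.image_image,
    Function.comp_def] using card_le_two_mul_card_image_snd hc hswap

theorem card_le_of_mem_box_of_mem_strip {s : Finset (ℤ × ℤ)} {w : ℕ} {v u : ℝ × ℝ} {R : ℝ}
    (hu : u.1 ^ 2 + u.2 ^ 2 = R ^ 2)
    (hbox : ∀ z ∈ s, |(z.1 : ℝ) - v.1| ≤ w ∧ |(z.2 : ℝ) - v.2| ≤ w)
    (hstrip : ∀ z ∈ s, 0 < ((z.1 : ℝ) - v.1) * u.1 + ((z.2 : ℝ) - v.2) * u.2 ∧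
      ((z.1 : ℝ) - v.1) * u.1 + ((z.2 : ℝ) - v.2) * u.2 < R) :
    s.card ≤ 2 * (2 * w + 1) := by
  set t := v.1 * u.1 + v.2 * u.2
  have hmem : ∀ z ∈ s, (z.1 : ℝ) * u.1 + z.2 * u.2 ∈ Ioo t (t + R) := fun z hz => by
    obtain ⟨h₁, h₂⟩ := hstrip z hz
    constructor <;> linarith
  have hfst : (s.image Prod.fst).card ≤ 2 * w + 1 := Int.card_le_of_abs_sub_le (a := v.1) <|
    Finset.forall_mem_image.mpr fun z hz => (hbox z hz).1
  have hsnd : (s.image Prod.snd).card ≤ 2 * w + 1 := Int.card_le_of_abs_sub_le (a := v.2) <|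
    Finset.forall_mem_image.mpr fun z hz => (hbox z hz).2
  rcases le_total (u.2 ^ 2) (u.1 ^ 2) with hle | hle
  · have hc : R ≤ 2 * |u.1| := (abs_le_of_sq_le_sq' (by
      rw [mul_pow, sq_abs]; nlinarith) (by positivity)).2
    linarith [card_le_two_mul_card_image_snd hc hmem]
  · have hc : R ≤ 2 * |u.2| := (abs_le_of_sq_le_sq' (by
      rw [mul_pow, sq_abs]; nlinarith) (by positivity)).2
    linarith [card_le_two_mul_card_image_fst hc hmem]

/-- There is an absolute constant C > 0 such that for every w ≥ 1, R ≥ w³, x ∈ ℝ², and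
    v ∈ ℝ² with ‖v − x‖₂ = R, the number of lattice points z with ‖z − v‖_∞ ≤ w lying
    strictly outside the disc of radius R about x but strictly on the same side of the
    tangent line at v as the disc is at most C·w. -/
theorem stmt8 : ∃ C : ℝ, 0 < C ∧ ∀ w : ℕ, 1 ≤ w → ∀ R : ℝ, (w : ℝ)^3 ≤ R →
    ∀ x v : ℝ × ℝ, Real.sqrt ((v.1 - x.1)^2 + (v.2 - x.2)^2) = R →
    (((Finset.Icc (⌈v.1 - (w : ℝ)⌉, ⌈v.2 - (w : ℝ)⌉) (⌊v.1 + (w : ℝ)⌋, ⌊v.2 + (w : ℝ)⌋)).filter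
        (fun z : ℤ × ℤ =>
          |(z.1 : ℝ) - v.1| ≤ w ∧ |(z.2 : ℝ) - v.2| ≤ w ∧
          R < Real.sqrt (((z.1 : ℝ) - x.1)^2 + ((z.2 : ℝ) - x.2)^2) ∧
          0 < ((z.1 : ℝ) - v.1) * (x.1 - v.1) + ((z.2 : ℝ) - v.2) * (x.2 - v.2))).card : ℝ)
      ≤ C * w := by
  refine ⟨6, by norm_num, fun w hw R hR x v hv => ?_⟩
  have hw₁ : (1 : ℝ) ≤ w := by exact_mod_cast hw
  have hwR : (w : ℝ) ^ 2 ≤ R := by nlinarith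
  have hu : (x.1 - v.1) ^ 2 + (x.2 - v.2) ^ 2 = R ^ 2 := by
    rw [← hv, Real.sq_sqrt (by positivity)]; ring
  refine (Nat.cast_le.mpr (card_le_of_mem_box_of_mem_strip (w := w) (v := v)
    (u := (x.1 - v.1, x.2 - v.2)) hu (fun z hz => ?_) (fun z hz => ?_))).trans ?_
  · exact ⟨(Finset.mem_filter.mp hz).2.1, (Finset.mem_filter.mp hz).2.2.1⟩
  · obtain ⟨-, hz₁, hz₂, hout, hside⟩ := Finset.mem_filter.mp hz
    have hout' := (Real.lt_sqrt ((sq_nonneg _).trans hwR)).mp hout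
    have h₁ := sq_le_sq' (abs_le.mp hz₁).1 (abs_le.mp hz₁).2
    have h₂ := sq_le_sq' (abs_le.mp hz₂).1 (abs_le.mp hz₂).2
    have hexpand : ((z.1 : ℝ) - x.1) ^ 2 + ((z.2 : ℝ) - x.2) ^ 2 =
        ((z.1 : ℝ) - v.1) ^ 2 + ((z.2 : ℝ) - v.2) ^ 2 + R ^ 2 -
          2 * (((z.1 : ℝ) - v.1) * (x.1 - v.1) + ((z.2 : ℝ) - v.2) * (x.2 - v.2)) := by
      linear_combination hu
    exact ⟨hside, by dsimp only; linarith⟩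
  · push_cast; linarith
end

section
/- Let X₁, X₂, …, Xₙ be {0,1}-valued random variables on a probability space such that for some real δ with 0 ≤ δ ≤ 1 and for every subset S ⊆ {1,…,n}, P(X_i = 1 for all i ∈ S) ≤ δ^{|S|}. Then for every real γ with δ ≤ γ ≤ 1, P(X₁ + ⋯ + Xₙ ≥ γn) ≤ e^{−2n(γ−δ)²}. -/
open MeasureTheory

open Real ProbabilityTheory unitInterval

/-! For `{0,1}`-valued variables `exp (t * ∑ i, X i) = ∏ i, (1 + (exp t - 1) * X i)`. Expanding the
product over subsets `S` and bounding `P(∀ i ∈ S, X i = 1)` by `δ ^ #S`, the moment generating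
function of `∑ i, X i` at `t ≥ 0` is at most `(1 + (exp t - 1) * δ) ^ n`, the one of a sum of `n`
independent Bernoulli(`δ`) variables. Hoeffding's lemma for the Bernoulli law bounds
`1 + (exp t - 1) * δ` by `exp (t * δ + t ^ 2 / 8)`, and the Chernoff bound at `t = 4 * (γ - δ)`
gives `exp (-2 * n * (γ - δ) ^ 2)`. -/

section

variable {Ω ι : Type*} {X : ι → Ω → ℝ}

lemma prod_eq_indicator_forall_eq_one (h01 : ∀ i ω, X i ω = 0 ∨ X i ω = 1) (S : Finset ι) :
    (fun ω => ∏ i ∈ S, X i ω) = {ω | ∀ i ∈ S, X i ω = 1}.indicator 1 := by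
  ext ω
  by_cases h : ∀ i ∈ S, X i ω = 1
  · simp [Finset.prod_congr rfl h, Set.indicator_of_mem (s := {ω | ∀ i ∈ S, X i ω = 1}) h]
  · obtain ⟨i, hi, hXi⟩ := not_forall₂.1 h
    rw [Finset.prod_eq_zero hi ((h01 i ω).resolve_right hXi)]
    simp [Set.indicator_of_notMem (s := {ω | ∀ i ∈ S, X i ω = 1}) h]

lemma exp_mul_sum_eq_prod_one_add [Fintype ι] (h01 : ∀ i ω, X i ω = 0 ∨ X i ω = 1)
    (t : ℝ) (ω : Ω) : exp (t * ∑ i, X i ω) = ∏ i, (1 + (exp t - 1) * X i ω) := by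
  rw [Finset.mul_sum, exp_sum]
  refine Finset.prod_congr rfl fun i _ => ?_
  rcases h01 i ω with h | h <;> simp [h]

lemma mgf_sum_le_of_measure_forall_eq_one_le [Fintype ι] [MeasurableSpace Ω] {μ : Measure Ω}
    [IsFiniteMeasure μ] (hmeas : ∀ i, Measurable (X i)) (h01 : ∀ i ω, X i ω = 0 ∨ X i ω = 1)
    {δ : ℝ} (hδ0 : 0 ≤ δ)
    (hneg : ∀ S : Finset ι, μ {ω | ∀ i ∈ S, X i ω = 1} ≤ ENNReal.ofReal (δ ^ S.card))
    {t : ℝ} (ht : 0 ≤ t) :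
    mgf (fun ω => ∑ i, X i ω) μ t ≤ (1 + (exp t - 1) * δ) ^ Fintype.card ι := by
  have hA (S : Finset ι) : MeasurableSet {ω | ∀ i ∈ S, X i ω = 1} := by
    simp only [Set.ofPred_forall]
    exact .biInter S.countable_toSet fun i _ => hmeas i (measurableSet_singleton 1)
  have hint (S : Finset ι) : Integrable (fun ω => ∏ i ∈ S, X i ω) μ := by
    rw [prod_eq_indicator_forall_eq_one h01]
    exact (integrable_const 1).indicator (hA S)
  calc mgf (fun ω => ∑ i, X i ω) μ t
      = ∑ S ∈ Finset.univ.powerset, (exp t - 1) ^ S.card * μ.real {ω | ∀ i ∈ S, X i ω = 1} := by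
        simp only [mgf, exp_mul_sum_eq_prod_one_add h01, Finset.prod_one_add,
          Finset.prod_mul_distrib, Finset.prod_const]
        rw [integral_finsetSum _ fun S _ => (hint S).const_mul _]
        refine Finset.sum_congr rfl fun S _ => ?_
        rw [integral_const_mul, prod_eq_indicator_forall_eq_one h01, integral_indicator_one (hA S)]
    _ ≤ ∑ S ∈ (Finset.univ : Finset ι).powerset, (exp t - 1) ^ S.card * δ ^ S.card := by
        have hc : 0 ≤ exp t - 1 := sub_nonneg.2 (one_le_exp ht)
        gcongr with S
        exact ENNReal.toReal_le_of_le_ofReal (by positivity) (hneg S)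
    _ = (1 + (exp t - 1) * δ) ^ Fintype.card ι := by
        rw [← Finset.card_univ, ← Finset.prod_const, Finset.prod_one_add]
        simp [mul_pow]

end

lemma one_add_exp_sub_one_mul_le {p : ℝ} (hp0 : 0 ≤ p) (hp1 : p ≤ 1) (t : ℝ) :
    1 + (exp t - 1) * p ≤ exp (t * p + t ^ 2 / 8) := by
  let q : I := ⟨p, hp0, hp1⟩
  have hmean : ∫ x, x ∂Ber((1 : ℝ), 0, q) = p := by simp [integral_bernoulliMeasure, q]
  have hsupp : ∀ᵐ x ∂Ber((1 : ℝ), 0, q), x ∈ Set.Icc (0 : ℝ) 1 :=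
    ae_iff.2 (bernoulliMeasure_apply_of_notMem_of_notMem q measurableSet_Icc.compl
      (by simp) (by simp))
  have hoeffding := (hasSubgaussianMGF_of_mem_Icc aemeasurable_id' hsupp).mgf_le t
  rw [mgf, integral_bernoulliMeasure, hmean] at hoeffding
  norm_num [q] at hoeffding
  calc 1 + (exp t - 1) * p
      = (p * exp (t * (1 - p)) + (1 - p) * exp (-(t * p))) * exp (t * p) := by
        have hexp : t * (1 - p) + t * p = t := by ring
        rw [add_mul, mul_assoc, mul_assoc, ← exp_add, ← exp_add, hexp, neg_add_cancel, exp_zero]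
        ring
    _ ≤ exp (1 / 4 * t ^ 2 / 2) * exp (t * p) := by gcongr
    _ = exp (t * p + t ^ 2 / 8) := by rw [← exp_add]; ring_nf

theorem stmt15_general {Ω : Type*} [MeasurableSpace Ω] (μ : Measure Ω) [IsProbabilityMeasure μ]
    (n : ℕ) (X : Fin n → Ω → ℝ)
    (hmeas : ∀ i, Measurable (X i))
    (h01 : ∀ i ω, X i ω = 0 ∨ X i ω = 1)
    (δ : ℝ) (hδ0 : 0 ≤ δ) (hδ1 : δ ≤ 1)
    (hneg : ∀ S : Finset (Fin n),
      μ {ω | ∀ i ∈ S, X i ω = 1} ≤ ENNReal.ofReal (δ ^ S.card))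
    (γ : ℝ) (hδγ : δ ≤ γ) :
    μ {ω | γ * n ≤ ∑ i, X i ω} ≤ ENNReal.ofReal (Real.exp (-2 * n * (γ - δ)^2)) := by
  set t := 4 * (γ - δ) with ht_def
  have ht : 0 ≤ t := by linarith
  have hX (i : Fin n) (ω : Ω) : X i ω ∈ Set.Icc (0 : ℝ) 1 := by
    rcases h01 i ω with h | h <;> simp [h]
  have hsum_mem (ω : Ω) : ∑ i, X i ω ∈ Set.Icc (0 : ℝ) n :=
    ⟨Finset.sum_nonneg fun i _ => (hX i ω).1,
      by simpa using Finset.sum_le_sum (s := Finset.univ) fun i _ => (hX i ω).2⟩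
  have hint : Integrable (fun ω => exp (t * ∑ i, X i ω)) μ :=
    integrable_exp_mul_of_mem_Icc (Finset.measurable_sum _ fun i _ => hmeas i).aemeasurable
      (ae_of_all μ hsum_mem)
  have hmgf := mgf_sum_le_of_measure_forall_eq_one_le hmeas h01 hδ0 hneg ht
  rw [Fintype.card_fin] at hmgf
  have hbase : 0 ≤ 1 + (exp t - 1) * δ :=
    add_nonneg zero_le_one (mul_nonneg (sub_nonneg.2 (one_le_exp ht)) hδ0)
  rw [← ofReal_measureReal]
  refine ENNReal.ofReal_le_ofReal ?_
  calc μ.real {ω | γ * n ≤ ∑ i, X i ω}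
      ≤ exp (-t * (γ * n)) * mgf (fun ω => ∑ i, X i ω) μ t := measure_ge_le_exp_mul_mgf _ ht hint
    _ ≤ exp (-t * (γ * n)) * exp (t * δ + t ^ 2 / 8) ^ n := by
        gcongr
        exact hmgf.trans (pow_le_pow_left₀ hbase (one_add_exp_sub_one_mul_le hδ0 hδ1 t) n)
    _ = exp (-2 * n * (γ - δ) ^ 2) := by
        rw [← exp_nat_mul, ← exp_add, ht_def]
        ring_nf

/-- Generalized Chernoff bound for negatively correlated Boolean random variables:
    if X₁,…,Xₙ are {0,1}-valued random variables such that for every subset S of indices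
    P(∀ i ∈ S, Xᵢ = 1) ≤ δ^{|S|}, then for every γ with δ ≤ γ ≤ 1,
    P(X₁ + ⋯ + Xₙ ≥ γn) ≤ e^{−2n(γ−δ)²}. -/
theorem stmt15 {Ω : Type*} [MeasurableSpace Ω] (μ : Measure Ω) [IsProbabilityMeasure μ]
    (n : ℕ) (X : Fin n → Ω → ℝ)
    (hmeas : ∀ i, Measurable (X i))
    (h01 : ∀ i ω, X i ω = 0 ∨ X i ω = 1)
    (δ : ℝ) (hδ0 : 0 ≤ δ) (hδ1 : δ ≤ 1)
    (hneg : ∀ S : Finset (Fin n),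
      μ {ω | ∀ i ∈ S, X i ω = 1} ≤ ENNReal.ofReal (δ ^ S.card))
    (γ : ℝ) (hδγ : δ ≤ γ) (hγ1 : γ ≤ 1) :
    μ {ω | γ * n ≤ ∑ i, X i ω} ≤ ENNReal.ofReal (Real.exp (-2 * n * (γ - δ)^2)) :=
  stmt15_general μ n X hmeas h01 δ hδ0 hδ1 hneg γ hδγ
end

section
/- Let ε be a real with 0 < ε ≤ 1/4 and let n be an integer with n ≥ 1/ε. If X is a binomial random variable with parameters n and 1/2, then P(X ≥ (1/2 + ε)n) ≥ e^{−20ε²n}/(n+1). -/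
/-!
The tail probability is at least `C(n, k) / 2ⁿ` for `k = ⌈(1/2 + ε) n⌉`, and the central
coefficient satisfies `2ⁿ ≤ (n + 1) C(n, ⌊n/2⌋)`. Walking from `⌊n/2⌋` up to `k`, each ratio
`C(n, j + 1) / C(n, j) = (n - j) / (j + 1)` is at least `r = (1 - 2ε) / (1 + 4ε) ≥ e^{-8ε}`, and
there are at most `5εn / 2` steps, so `C(n, k) ≥ e^{-20ε²n} C(n, ⌊n/2⌋)`.
-/

open Real Finset

namespace Nat

theorem two_pow_le_succ_mul_choose_half (n : ℕ) : 2 ^ n ≤ (n + 1) * n.choose (n / 2) :=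
  calc 2 ^ n = ∑ i ∈ range (n + 1), n.choose i := (sum_range_choose n).symm
    _ ≤ ∑ _ ∈ range (n + 1), n.choose (n / 2) := by gcongr; apply choose_le_middle
    _ = (n + 1) * n.choose (n / 2) := by simp

theorem choose_mul_le_choose_succ {n j : ℕ} {r : ℝ} (hj : j ≤ n) (h : r * (j + 1) ≤ n - j) :
    (n.choose j : ℝ) * r ≤ n.choose (j + 1) := by
  have hratio : (n.choose (j + 1) : ℝ) * (j + 1) = n.choose j * (n - j) := by
    rw [← Nat.cast_sub hj]
    exact_mod_cast choose_succ_right_eq n j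
  rw [← mul_le_mul_iff_of_pos_right (by positivity : (0 : ℝ) < j + 1), hratio, mul_assoc]
  gcongr

theorem choose_mul_pow_le_choose {n a b : ℕ} {r : ℝ} (hr : 0 ≤ r) (hab : a ≤ b) (hbn : b ≤ n)
    (h : ∀ j, a ≤ j → j < b → r * (j + 1) ≤ n - j) :
    (n.choose a : ℝ) * r ^ (b - a) ≤ n.choose b := by
  obtain ⟨d, rfl⟩ := Nat.exists_eq_add_of_le hab
  rw [Nat.add_sub_cancel_left, mul_comm]
  exact geom_le (u := fun i ↦ (n.choose (a + i) : ℝ)) hr d fun i hi ↦ by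
    rw [mul_comm]
    exact choose_mul_le_choose_succ (by omega) (h (a + i) (by omega) (by omega))

end Nat

theorem exp_neg_eight_mul_le_div {ε : ℝ} (hε0 : 0 ≤ ε) (hε : ε ≤ 1 / 4) :
    exp (-(8 * ε)) ≤ (1 - 2 * ε) / (1 + 4 * ε) := by
  have hexp : exp (-(4 * ε)) ≤ (1 + 4 * ε)⁻¹ := by
    rw [exp_neg]
    gcongr
    linarith [add_one_le_exp (4 * ε)]
  have hinv : (1 + 4 * ε)⁻¹ ≤ 1 - 2 * ε := by
    rw [inv_le_iff_one_le_mul₀ (by positivity)]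
    nlinarith
  calc exp (-(8 * ε)) = exp (-(4 * ε)) * exp (-(4 * ε)) := by rw [← exp_add]; ring_nf
    _ ≤ (1 + 4 * ε)⁻¹ * (1 - 2 * ε) := by gcongr; exact hexp.trans hinv
    _ = (1 - 2 * ε) / (1 + 4 * ε) := inv_mul_eq_div _ _

theorem div_mul_succ_le_sub {ε n x : ℝ} (hε : 0 < ε) (hε2 : ε ≤ 1 / 2) (hεn : 1 ≤ ε * n)
    (hx : x ≤ (1 / 2 + ε) * n) : (1 - 2 * ε) / (1 + 4 * ε) * (x + 1) ≤ n - x := by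
  rw [div_mul_eq_mul_div, div_le_iff₀ (by positivity)]
  nlinarith [mul_le_mul_of_nonneg_left hx (by positivity : (0 : ℝ) ≤ 2 + 2 * ε),
    mul_nonneg (sub_nonneg.mpr hεn) (by linarith : (0 : ℝ) ≤ 1 - 2 * ε)]

theorem choose_half_mul_exp_le_choose_ceil {ε : ℝ} (hε : 0 < ε) (hε4 : ε ≤ 1 / 4) {n : ℕ}
    (hεn : 1 ≤ ε * n) :
    (n.choose (n / 2) : ℝ) * exp (-(20 * ε ^ 2 * n)) ≤ n.choose ⌈(1 / 2 + ε) * (n : ℝ)⌉₊ := by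
  set k := ⌈(1 / 2 + ε) * (n : ℝ)⌉₊
  set r := (1 - 2 * ε) / (1 + 4 * ε)
  have hk : (k : ℝ) < (1 / 2 + ε) * n + 1 := Nat.ceil_lt_add_one (by positivity)
  have hkn : k ≤ n := Nat.ceil_le.mpr (by nlinarith)
  have hhalf : (n : ℝ) ≤ 2 * (n / 2 : ℕ) + 1 := by exact_mod_cast (by omega : n ≤ 2 * (n / 2) + 1)
  have hhalf_k : n / 2 ≤ k := by
    have : ((n / 2 : ℕ) : ℝ) ≤ k := by
      linarith [Nat.le_ceil ((1 / 2 + ε) * (n : ℝ)), Nat.cast_div_le (α := ℝ) (m := n) (n := 2)]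
    exact_mod_cast this
  have hsteps : ((k - n / 2 : ℕ) : ℝ) ≤ 5 / 2 * (ε * n) := by
    rw [Nat.cast_sub hhalf_k]
    linarith
  have hgrowth : n.choose (n / 2) * r ^ (k - n / 2) ≤ n.choose k := by
    refine Nat.choose_mul_pow_le_choose (div_nonneg (by linarith) (by positivity)) hhalf_k hkn
      fun j _ hj ↦ div_mul_succ_le_sub hε (by linarith) hεn ?_
    have : (j : ℝ) + 1 ≤ k := by exact_mod_cast hj
    linarith
  have hexp : exp (-(20 * ε ^ 2 * n)) ≤ r ^ (k - n / 2) :=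
    calc exp (-(20 * ε ^ 2 * n)) ≤ exp ((k - n / 2 : ℕ) * -(8 * ε)) := by
          gcongr
          nlinarith
      _ = exp (-(8 * ε)) ^ (k - n / 2) := exp_nat_mul _ _
      _ ≤ r ^ (k - n / 2) := by gcongr; exact exp_neg_eight_mul_le_div hε.le hε4
  calc (n.choose (n / 2) : ℝ) * exp (-(20 * ε ^ 2 * n))
      ≤ n.choose (n / 2) * r ^ (k - n / 2) := by gcongr
    _ ≤ n.choose k := hgrowth

/-- For 0 < ε ≤ 1/4 and n ≥ 1/ε, for X ~ B(n,1/2):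
    P(X ≥ (1/2+ε)n) = 2^{−n} ∑_{i=⌈(1/2+ε)n⌉}^n C(n,i) ≥ e^{−20ε²n}/(n+1). -/
theorem stmt17 (ε : ℝ) (hε : 0 < ε) (hε4 : ε ≤ 1/4) (n : ℕ) (hn : 1/ε ≤ (n : ℝ)) :
    (∑ i ∈ Finset.Icc ⌈(1/2 + ε) * (n : ℝ)⌉₊ n, (n.choose i : ℝ)) / 2 ^ n
      ≥ Real.exp (-(20 * ε^2 * n)) / (n + 1) := by
  set k := ⌈(1/2 + ε) * (n : ℝ)⌉₊
  have hεn : 1 ≤ ε * n := by rwa [div_le_iff₀' hε] at hn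
  have hkn : k ≤ n := Nat.ceil_le.mpr (by nlinarith)
  have hcentral : (2 : ℝ) ^ n ≤ (n + 1) * n.choose (n / 2) := by
    exact_mod_cast Nat.two_pow_le_succ_mul_choose_half n
  have htail : (n.choose k : ℝ) ≤ ∑ i ∈ Icc k n, (n.choose i : ℝ) :=
    single_le_sum (f := fun i ↦ (n.choose i : ℝ)) (fun _ _ ↦ by positivity) (by simp [hkn])
  rw [ge_iff_le, div_le_div_iff₀ (by positivity) (by positivity)]
  calc exp (-(20 * ε ^ 2 * n)) * 2 ^ n
      ≤ exp (-(20 * ε ^ 2 * n)) * ((n + 1) * n.choose (n / 2)) := by gcongr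
    _ = n.choose (n / 2) * exp (-(20 * ε ^ 2 * n)) * (n + 1) := by ring
    _ ≤ (∑ i ∈ Icc k n, (n.choose i : ℝ)) * (n + 1) := by
        gcongr
        exact (choose_half_mul_exp_le_choose_ceil hε hε4 hεn).trans htail
end
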